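/- arXiv:1004.4172 — 12 statements merged into one kernel-verified Lean document; each statement's English description precedes it below -/
import Mathlib

section
/- Let S be a set, Λ a totally ordered index set, and (P_λ)_{λ∈Λ} a family of maps S → S. For s ∈ S let Supp(s) = {λ : P_λ(s) ≠ s}. Assume: (1) Supp(s) is finite for all s; (2) if λ is the least element of Supp(s), then Supp(P_λ(s)) ⊆ Supp(s) \ {λ}. Then for any finite subset F ⊆ Λ containing Supp(s), the composite P_F(s) (applying the P_λ for λ ∈ F in increasing order) has empty support, i.e. every P_μ fixes P_F(s). -/
/-- Apply the maps `P a` for `a` in the list, in list order (head first). -/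
def applySorted {S Λ : Type*} (P : Λ → S → S) : List Λ → S → S
  | [], s => s
  | a :: l, s => applySorted P l (P a s)

/-- The support of `s`: the indices `lam` such that `P lam` does not fix `s`. -/
def Supp {S Λ : Type*} (P : Λ → S → S) (s : S) : Set Λ := {lam | P lam s ≠ s}

/-!
Along the increasing enumeration `a₀ < a₁ < …` of `F`, the invariant is that the support of the
current point lies in the indices not yet applied. If `P aᵢ` moves the point, then `aᵢ` is the
least element of its support, so applying `P aᵢ` shrinks the support to a subset of the later
indices; if it does not move it, nothing changes. Once `F` is exhausted the support is empty.
-/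

section

variable {S Λ : Type*} [Preorder Λ] (P : Λ → S → S)

lemma supp_apply_subset_of_forall_le
    (hleast : ∀ s lam, IsLeast (Supp P s) lam → Supp P (P lam s) ⊆ Supp P s \ {lam})
    {a : Λ} {l : List Λ} (hal : ∀ b ∈ l, a ≤ b) {s : S} (hs : Supp P s ⊆ {x | x ∈ a :: l}) :
    Supp P (P a s) ⊆ {x | x ∈ l} := by
  by_cases ha : a ∈ Supp P s
  · have ha_least : IsLeast (Supp P s) a := by
      refine ⟨ha, fun b hb => ?_⟩
      rcases List.mem_cons.mp (hs hb) with rfl | hb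
      · exact le_rfl
      · exact hal b hb
    intro x hx
    obtain ⟨hxs, hxa⟩ := hleast s a ha_least hx
    exact (List.mem_cons.mp (hs hxs)).resolve_left hxa
  · rw [show P a s = s from not_not.mp ha]
    intro x hx
    exact (List.mem_cons.mp (hs hx)).resolve_left (by rintro rfl; exact ha hx)

lemma supp_applySorted_eq_empty
    (hleast : ∀ s lam, IsLeast (Supp P s) lam → Supp P (P lam s) ⊆ Supp P s \ {lam})
    {l : List Λ} (hl : l.Pairwise (· ≤ ·)) {s : S} (hs : Supp P s ⊆ {x | x ∈ l}) :
    Supp P (applySorted P l s) = ∅ := by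
  induction l generalizing s with
  | nil => simpa [applySorted] using hs
  | cons a l ih =>
    obtain ⟨hal, hl⟩ := List.pairwise_cons.mp hl
    exact ih hl (supp_apply_subset_of_forall_le P hleast hal hs)

end

theorem stmt2_general {S Λ : Type*} [LinearOrder Λ] (P : Λ → S → S)
    (hleast : ∀ s lam, IsLeast (Supp P s) lam → Supp P (P lam s) ⊆ Supp P s \ {lam})
    (s : S) (F : Finset Λ) (hF : Supp P s ⊆ ↑F) :
    Supp P (applySorted P (F.sort (· ≤ ·)) s) = ∅ :=
  supp_applySorted_eq_empty P hleast (F.pairwise_sort _) fun _ hx =>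
    (F.mem_sort _).mpr (hF hx)

/-- If supports are finite, and applying the map indexed by the least element of the support
strictly shrinks the support, then applying the maps indexed by any finite set `F` containing
the support of `s`, in increasing order, yields a point with empty support. -/
theorem stmt2 {S Λ : Type*} [LinearOrder Λ] (P : Λ → S → S)
    (hfin : ∀ s, (Supp P s).Finite)
    (hleast : ∀ s lam, IsLeast (Supp P s) lam → Supp P (P lam s) ⊆ Supp P s \ {lam})
    (s : S) (F : Finset Λ) (hF : Supp P s ⊆ ↑F) :
    Supp P (applySorted P (F.sort (· ≤ ·)) s) = ∅ :=
  stmt2_general P hleast s F hF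
end

section
/- Under the hypotheses of the infinite-composition lemma, if F and F' are two finite subsets of Λ both containing Supp(s), then P_F(s) = P_{F'}(s); in particular, if Supp(s) is empty then P_F(s) = s for every finite F. -/
/-!
Let `λ` be the least element of `Supp(s)`. In an increasing enumeration of any `F ⊇ Supp(s)`,
the indices before `λ` fix `s`, so `P_F(s) = P_{F'}(P_λ(s))` with `F' = {μ ∈ F : λ < μ}`; and
`F'` contains `Supp(P_λ(s))`, a strictly smaller set. Induction on `#Supp(s)` then shows that
`P_F(s)` does not depend on `F`.
-/

section

variable {S Λ : Type*} (P : Λ → S → S)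

theorem applySorted_eq_self {s : S} {l : List Λ} (h : ∀ a ∈ l, a ∉ Supp P s) :
    applySorted P l s = s := by
  induction l with
  | nil => rfl
  | cons a l ih =>
    have ha : P a s = s := not_not.1 (h a List.mem_cons_self)
    rw [applySorted, ha]
    exact ih fun b hb => h b (List.mem_cons_of_mem a hb)

variable [LinearOrder Λ]

theorem applySorted_eq_applySorted_filter_of_isLeast {s : S} {lam : Λ}
    (hlam : IsLeast (Supp P s) lam) {l : List Λ} (hl : l.Pairwise (· < ·))
    (hsub : Supp P s ⊆ {a | a ∈ l}) :
    applySorted P l s = applySorted P (l.filter (lam < ·)) (P lam s) := by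
  induction l with
  | nil => exact absurd (hsub hlam.1) List.not_mem_nil
  | cons a l ih =>
    obtain ⟨ha_lt, hl⟩ := List.pairwise_cons.1 hl
    rcases eq_or_ne a lam with rfl | hne
    · have hfilter : l.filter (a < ·) = l :=
        List.filter_eq_self.2 fun b hb => by simpa using ha_lt b hb
      simp [applySorted, hfilter]
    · have hlam_mem : lam ∈ l := (List.mem_cons.1 (hsub hlam.1)).resolve_left hne.symm
      have ha_lt_lam : a < lam := ha_lt lam hlam_mem
      have ha : P a s = s := not_not.1 fun ha => (hlam.2 ha).not_gt ha_lt_lam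
      have hsub' : Supp P s ⊆ {b | b ∈ l} := fun b hb =>
        (List.mem_cons.1 (hsub hb)).resolve_left fun hba => hb (hba ▸ ha)
      simp [applySorted, ha, ha_lt_lam.not_gt, ih hl hsub']

theorem applySorted_eq_of_supp_subset (hfin : ∀ s, (Supp P s).Finite)
    (hleast : ∀ s lam, IsLeast (Supp P s) lam → Supp P (P lam s) ⊆ Supp P s \ {lam})
    (s : S) {l l' : List Λ} (hl : l.Pairwise (· < ·)) (hl' : l'.Pairwise (· < ·))
    (hsub : Supp P s ⊆ {a | a ∈ l}) (hsub' : Supp P s ⊆ {a | a ∈ l'}) :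
    applySorted P l s = applySorted P l' s := by
  rcases (Supp P s).eq_empty_or_nonempty with hempty | hne
  · have hfix : ∀ l : List Λ, applySorted P l s = s := fun l =>
      applySorted_eq_self P fun a _ => hempty ▸ Set.notMem_empty a
    rw [hfix, hfix]
  obtain ⟨lam, hlam_mem, hlam_min⟩ := Set.exists_min_image (Supp P s) id (hfin s) hne
  have hlam : IsLeast (Supp P s) lam := ⟨hlam_mem, fun b hb => hlam_min b hb⟩
  have hstep := hleast s lam hlam
  have hsub_filter {l : List Λ} (hsub : Supp P s ⊆ {a | a ∈ l}) :
      Supp P (P lam s) ⊆ {a | a ∈ l.filter (lam < ·)} := fun a ha => by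
    obtain ⟨ha, hne⟩ := hstep ha
    simpa using ⟨hsub ha, lt_of_le_of_ne (hlam.2 ha) (Ne.symm hne)⟩
  have hcard_lt : (Supp P (P lam s)).ncard < (Supp P s).ncard :=
    Set.ncard_lt_ncard (hstep.trans_ssubset (Set.sdiff_singleton_ssubset.2 hlam_mem)) (hfin s)
  rw [applySorted_eq_applySorted_filter_of_isLeast P hlam hl hsub,
    applySorted_eq_applySorted_filter_of_isLeast P hlam hl' hsub']
  exact applySorted_eq_of_supp_subset hfin hleast (P lam s) (hl.filter _) (hl'.filter _)
    (hsub_filter hsub) (hsub_filter hsub')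
termination_by (Supp P s).ncard

end

/-- Under the hypotheses of the infinite-composition lemma, the result `P_F(s)` does not depend
on the finite set `F ⊇ Supp(s)`; in particular if `Supp(s) = ∅` then `P_F(s) = s` for all `F`. -/
theorem stmt3 {S Λ : Type*} [LinearOrder Λ] (P : Λ → S → S)
    (hfin : ∀ s, (Supp P s).Finite)
    (hleast : ∀ s lam, IsLeast (Supp P s) lam → Supp P (P lam s) ⊆ Supp P s \ {lam})
    (s : S) :
    (∀ F F' : Finset Λ, Supp P s ⊆ ↑F → Supp P s ⊆ ↑F' →
      applySorted P (F.sort (· ≤ ·)) s = applySorted P (F'.sort (· ≤ ·)) s) ∧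
    (Supp P s = ∅ → ∀ F : Finset Λ, applySorted P (F.sort (· ≤ ·)) s = s) := by
  have hsorted (F : Finset Λ) : (F.sort (· ≤ ·)).Pairwise (· < ·) :=
    List.sortedLT_iff_pairwise.1 (Finset.sortedLT_sort F)
  refine ⟨fun F F' hF hF' => ?_, fun hempty F => ?_⟩
  · exact applySorted_eq_of_supp_subset P hfin hleast s (hsorted F) (hsorted F')
      (fun a ha => by simpa using hF ha) (fun a ha => by simpa using hF' ha)
  · exact applySorted_eq_self P fun a _ => hempty ▸ Set.notMem_empty a
end

section
/- Under the hypotheses of the infinite-composition lemma, if S is a metric space and each P_λ is 1-Lipschitz, then the map P : S → S defined by P(s) = P_F(s) for any finite F containing Supp(s) is well-defined and 1-Lipschitz. -/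
namespace applySorted

variable {S Λ : Type*} (P : Λ → S → S)

theorem eq_self {l : List Λ} {s : S} (h : ∀ a ∈ l, a ∉ Supp P s) : applySorted P l s = s := by
  induction l with
  | nil => rfl
  | cons a l ih =>
    have hfix : P a s = s := not_not.mp (h a List.mem_cons_self)
    rw [applySorted, hfix]
    exact ih fun b hb => h b (List.mem_cons_of_mem a hb)

theorem lipschitzWith_one [PseudoMetricSpace S] (hlip : ∀ a, LipschitzWith 1 (P a))
    (l : List Λ) : LipschitzWith 1 (applySorted P l) := by
  induction l with
  | nil => exact LipschitzWith.id
  | cons a l ih => exact (mul_one (1 : NNReal)) ▸ ih.comp (hlip a)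

variable [LinearOrder Λ]

theorem eq_filter_of_isLeast {l : List Λ} (hl : l.Pairwise (· < ·)) {s : S} {a : Λ}
    (ha : IsLeast (Supp P s) a) (hcover : Supp P s ⊆ {x | x ∈ l}) :
    applySorted P l s = applySorted P (l.filter (a < ·)) (P a s) := by
  induction l with
  | nil => exact absurd (hcover ha.1) List.not_mem_nil
  | cons b l ih =>
    obtain ⟨hb_lt, hl⟩ := List.pairwise_cons.mp hl
    rcases lt_trichotomy b a with hba | rfl | hab
    · have hb : b ∉ Supp P s := fun hb => (ha.2 hb).not_gt hba
      have hcover' : Supp P s ⊆ {x | x ∈ l} := fun x hx =>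
        (List.mem_cons.mp (hcover hx)).resolve_left (by rintro rfl; exact hb hx)
      rw [applySorted, not_not.mp hb, List.filter_cons_of_neg (by simpa using hba.le)]
      exact ih hl hcover'
    · rw [applySorted, List.filter_cons_of_neg (by simp),
        List.filter_eq_self.mpr fun x hx => by simpa using hb_lt x hx]
    · have ha_mem : a ∈ l := (List.mem_cons.mp (hcover ha.1)).resolve_left hab.ne
      exact absurd (hb_lt a ha_mem) hab.not_gt

variable (hleast : ∀ s a, IsLeast (Supp P s) a → Supp P (P a s) ⊆ Supp P s \ {a})
include hleast

theorem supp_subset_filter_of_isLeast {l : List Λ} {s : S} {a : Λ} (ha : IsLeast (Supp P s) a)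
    (hcover : Supp P s ⊆ {x | x ∈ l}) : Supp P (P a s) ⊆ {x | x ∈ l.filter (a < ·)} := by
  intro x hx
  obtain ⟨hxs, hxa⟩ := hleast s a ha hx
  simpa using ⟨hcover hxs, lt_of_le_of_ne (ha.2 hxs) (Ne.symm hxa)⟩

theorem eq_of_supp_subset (hfin : ∀ s, (Supp P s).Finite) {l₁ l₂ : List Λ}
    (hl₁ : l₁.Pairwise (· < ·)) (hl₂ : l₂.Pairwise (· < ·)) {s : S}
    (hcover₁ : Supp P s ⊆ {x | x ∈ l₁}) (hcover₂ : Supp P s ⊆ {x | x ∈ l₂}) :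
    applySorted P l₁ s = applySorted P l₂ s := by
  rcases (Supp P s).eq_empty_or_nonempty with hempty | hne
  · rw [eq_self P (by simp [hempty]), eq_self P (by simp [hempty])]
  obtain ⟨a, haS, ha_le⟩ := Set.exists_min_image _ id (hfin s) hne
  have ha : IsLeast (Supp P s) a := ⟨haS, ha_le⟩
  have hdecr : (Supp P (P a s)).ncard < (Supp P s).ncard :=
    (Set.ncard_le_ncard (hleast s a ha) ((hfin s).sdiff)).trans_lt
      (Set.ncard_sdiff_singleton_lt_of_mem haS (hfin s))
  rw [eq_filter_of_isLeast P hl₁ ha hcover₁, eq_filter_of_isLeast P hl₂ ha hcover₂]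
  exact eq_of_supp_subset hfin (hl₁.filter _) (hl₂.filter _)
    (supp_subset_filter_of_isLeast P hleast ha hcover₁)
    (supp_subset_filter_of_isLeast P hleast ha hcover₂)
termination_by (Supp P s).ncard

theorem sort_eq_of_supp_subset (hfin : ∀ s, (Supp P s).Finite) {s : S} {F G : Finset Λ}
    (hF : Supp P s ⊆ ↑F) (hG : Supp P s ⊆ ↑G) :
    applySorted P (F.sort (· ≤ ·)) s = applySorted P (G.sort (· ≤ ·)) s :=
  eq_of_supp_subset P hleast hfin F.sortedLT_sort.pairwise G.sortedLT_sort.pairwise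
    (fun x hx => by simpa using hF hx) (fun x hx => by simpa using hG hx)

end applySorted

/-- If `S` is a metric space and each `P lam` is 1-Lipschitz, then under the hypotheses of the
infinite-composition lemma the map `P : s ↦ P_F(s)` (for any finite `F ⊇ Supp(s)`) is a
well-defined 1-Lipschitz map. -/
theorem stmt4 {S Λ : Type*} [MetricSpace S] [LinearOrder Λ] (P : Λ → S → S)
    (hfin : ∀ s, (Supp P s).Finite)
    (hleast : ∀ s lam, IsLeast (Supp P s) lam → Supp P (P lam s) ⊆ Supp P s \ {lam})
    (hlip : ∀ lam, LipschitzWith 1 (P lam)) :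
    ∃ Q : S → S,
      (∀ s, ∀ F : Finset Λ, Supp P s ⊆ ↑F → Q s = applySorted P (F.sort (· ≤ ·)) s) ∧
      LipschitzWith 1 Q := by
  set Q : S → S := fun s => applySorted P ((hfin s).toFinset.sort (· ≤ ·)) s
  have hQ : ∀ s, ∀ F : Finset Λ, Supp P s ⊆ ↑F → Q s = applySorted P (F.sort (· ≤ ·)) s :=
    fun s F hF => applySorted.sort_eq_of_supp_subset P hleast hfin (by simp) hF
  refine ⟨Q, hQ, LipschitzWith.mk_one fun x y => ?_⟩
  set F := (hfin x).toFinset ∪ (hfin y).toFinset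
  rw [hQ x F (by simp [F]), hQ y F (by simp [F])]
  simpa using (applySorted.lipschitzWith_one P hlip _).dist_le_mul x y
end

section
/- In a finite-dimensional CAT(0) cube complex of dimension d, every hyperplane has at most d predecessors. -/
/-- An abstract model of the hyperplanes of a CAT(0) cube complex with basepoint: each
hyperplane `h` has an outward halfspace `plus h` (the side not containing the basepoint `x0`);
halfspaces are nonempty, determine their hyperplane, and only finitely many hyperplanes
separate the basepoint from any given hyperplane. -/
structure Halfspaces (V H : Type*) where
  plus : H → Set V
  x0 : V
  basepoint : ∀ h, x0 ∉ plus h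
  plus_nonempty : ∀ h, (plus h).Nonempty
  plus_injective : ∀ h k, plus h = plus k → h = k
  lowerFinite : ∀ h, {k | plus h ⊂ plus k}.Finite

namespace Halfspaces

variable {V H : Type*} (M : Halfspaces V H)

/-- `k < h`: the hyperplane `k` separates the basepoint from `h`, i.e. `k⁺ ⊋ h⁺`. -/
def Lt (k h : H) : Prop := M.plus h ⊂ M.plus k

/-- Two hyperplanes are opposite if their outward halfspaces are disjoint. -/
def Opp (h k : H) : Prop := M.plus h ∩ M.plus k = ∅

/-- Two hyperplanes intersect (cross) if all four quadrants are nonempty. -/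
def Inter (h k : H) : Prop :=
  (M.plus h ∩ M.plus k).Nonempty ∧ (M.plus h \ M.plus k).Nonempty ∧
    (M.plus k \ M.plus h).Nonempty ∧ ((M.plus h ∪ M.plus k)ᶜ : Set V).Nonempty

/-- `k` is a predecessor of `h`: `k < h` with nothing strictly between. -/
def Pred (k h : H) : Prop := M.Lt k h ∧ ¬ ∃ j, M.Lt k j ∧ M.Lt j h

/-- `h` is contained in a `d`-corner bounded by hyperplanes of `A`: there are `d` pairwise
intersecting hyperplanes in `A`, each of whose outward halfspaces strictly contains `h⁺`. -/
def InCorner (d : ℕ) (A : Set H) (h : H) : Prop :=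
  ∃ S : Finset H, ↑S ⊆ A ∧ S.card = d ∧
    (∀ k ∈ S, ∀ j ∈ S, k ≠ j → M.Inter k j) ∧ ∀ k ∈ S, M.Lt k h

/-- The iterated sets `H^d_{≥n}` used to define the `d`-rank. -/
def Hlevel (d : ℕ) : ℕ → Set H
  | 0 => Set.univ
  | n + 1 => {h | h ∈ Hlevel d n ∧ M.InCorner d (Hlevel d n) h}

/-- The `d`-rank of `h`: the least `n` such that `h ∉ H^d_{≥ n+1}` (or `⊤` if none). -/
noncomputable def drank (d : ℕ) (h : H) : ℕ∞ :=
  sInf {N : ℕ∞ | ∃ n : ℕ, N = (n : ℕ∞) ∧ h ∉ M.Hlevel d (n + 1)}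

end Halfspaces

/-- In a cube complex of dimension `d` (at most `d` pairwise intersecting hyperplanes), every
hyperplane has at most `d` predecessors. -/
theorem stmt6 {V H : Type*} (M : Halfspaces V H) (d : ℕ)
    (hdim : ∀ S : Finset H, (∀ h ∈ S, ∀ k ∈ S, h ≠ k → M.Inter h k) → S.card ≤ d)
    (h : H) (S : Finset H) (hS : ∀ k ∈ S, M.Pred k h) :
    S.card ≤ d := by
  apply hdim
  intro k1 hk1 k2 hk2 hne
  obtain ⟨hlt1, hnb1⟩ := hS k1 hk1
  obtain ⟨hlt2, hnb2⟩ := hS k2 hk2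
  have hsub : M.plus h ⊆ M.plus k1 ∩ M.plus k2 :=
    Set.subset_inter hlt1.subset hlt2.subset
  have hdiff : ∀ (a b : H), M.Lt a h → M.Lt b h →
      (¬ ∃ j, M.Lt b j ∧ M.Lt j h) → a ≠ b → (M.plus a \ M.plus b).Nonempty := by
    intro a b hla hlb hnb hab
    by_contra hempty
    rw [Set.not_nonempty_iff_eq_empty, Set.diff_eq_empty] at hempty
    rcases hempty.ssubset_or_eq with hss | heq
    · exact hnb ⟨a, hss, hla⟩
    · exact hab (M.plus_injective a b heq)
  refine ⟨(M.plus_nonempty h).mono hsub, hdiff k1 k2 hlt1 hlt2 hnb2 hne,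
    hdiff k2 k1 hlt2 hlt1 hnb1 hne.symm, ⟨M.x0, ?_⟩⟩
  simp [M.basepoint]
end

section
/- Let X be a (d+1)-flat CAT(0) cube complex (no hyperplane lies in a (d+1)-corner). Then every hyperplane h of X has at most d predecessors, and every predecessor k of h satisfies d-rank(k) ≥ d-rank(h) − 1. -/
/-!
Two distinct predecessors `j, k` of `h` must cross: both contain `h⁺`, and nesting of `j⁺, k⁺`
would put one strictly between the other and `h`. Hence the predecessors of `h` form a corner
at `h`, and flatness bounds their number by `d`. For the rank estimate, let `h` be bounded by a
`d`-corner `S` of rank-`≥ n` hyperplanes and let `k` be a predecessor of `h`. If some `a ∈ S`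
lies below `k`, the corner bounding `a` also bounds `k`; if not, every member of `S` other than
`k` crosses `k`, so `S ∪ {k}` is a `(d+1)`-corner at `h` unless `k ∈ S`. Induction on `n`
shows `h ∈ H^d_{≥ n+1} → k ∈ H^d_{≥ n}`.
-/

namespace Halfspaces

variable {V H : Type*} {M : Halfspaces V H}

def IsFlat (M : Halfspaces V H) (d : ℕ) : Prop := ∀ h : H, ¬ M.InCorner d Set.univ h

theorem inter_comm {h k : H} : M.Inter h k ↔ M.Inter k h := by
  unfold Inter
  rw [Set.inter_comm, Set.union_comm]
  tauto

instance : Std.Symm M.Inter := ⟨fun _ _ => inter_comm.1⟩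

theorem inCorner_of_le_card {d : ℕ} {A : Set H} {h : H} {S : Finset H} (hSA : ↑S ⊆ A)
    (hS : (S : Set H).Pairwise M.Inter) (hSh : ∀ k ∈ S, M.Lt k h) (hd : d ≤ S.card) :
    M.InCorner d A h := by
  obtain ⟨T, hTS, hT⟩ := Finset.exists_subset_card_eq hd
  exact ⟨T, (Finset.coe_subset.2 hTS).trans hSA, hT, hS.mono (Finset.coe_subset.2 hTS),
    fun k hk => hSh k (hTS hk)⟩

theorem InCorner.of_lt {d : ℕ} {A : Set H} {a k : H} (ha : M.InCorner d A a) (hak : M.Lt a k) :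
    M.InCorner d A k := by
  obtain ⟨T, hTA, hT, hTpair, hTa⟩ := ha
  exact ⟨T, hTA, hT, hTpair, fun t ht => hak.trans (hTa t ht)⟩

theorem Pred.inter_of_not_lt {h k j : H} (hk : M.Pred k h) (hj : M.Lt j h) (hjk : j ≠ k)
    (hnlt : ¬ M.Lt j k) : M.Inter j k := by
  have hne : M.plus j ≠ M.plus k := fun he => hjk (M.plus_injective _ _ he)
  obtain ⟨x, hx⟩ := M.plus_nonempty h
  refine ⟨⟨x, hj.1 hx, hk.1.1 hx⟩, ?_, ?_,
    M.x0, fun hx0 => hx0.elim (M.basepoint j) (M.basepoint k)⟩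
  · -- `j⁺ ⊊ k⁺` would put `j` strictly between `k` and `h`
    refine Set.sdiff_nonempty.2 fun hjk' => hk.2 ⟨j, ?_, hj⟩
    exact hjk'.ssubset_of_ne hne
  · exact Set.sdiff_nonempty.2 fun hkj => hnlt (hkj.ssubset_of_ne hne.symm)

theorem Pred.inter {h k j : H} (hk : M.Pred k h) (hj : M.Pred j h) (hjk : j ≠ k) :
    M.Inter j k :=
  hk.inter_of_not_lt hj.1 hjk fun hlt => hj.2 ⟨k, hlt, hk.1⟩

theorem card_le_of_forall_pred {d : ℕ} (hflat : M.IsFlat (d + 1)) {h : H} {S : Finset H}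
    (hS : ∀ k ∈ S, M.Pred k h) : S.card ≤ d := by
  by_contra! hcard
  refine hflat h (inCorner_of_le_card (Set.subset_univ _) ?_ (fun k hk => (hS k hk).1) hcard)
  exact fun j hj k hk hjk => (hS k hk).inter (hS j hj) hjk

theorem Pred.mem_or_exists_lt {d : ℕ} (hflat : M.IsFlat (d + 1)) {h k : H} (hk : M.Pred k h)
    {S : Finset H} (hS : (S : Set H).Pairwise M.Inter) (hSh : ∀ a ∈ S, M.Lt a h)
    (hcard : S.card = d) : k ∈ S ∨ ∃ a ∈ S, M.Lt a k := by
  classical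
  by_contra! ⟨hkS, hnlt⟩
  refine hflat h (inCorner_of_le_card (S := insert k S) (Set.subset_univ _) ?_ ?_ ?_)
  · rw [Finset.coe_insert, Set.pairwise_insert_of_symm]
    exact ⟨hS, fun a ha hka => inter_comm.1 (hk.inter_of_not_lt (hSh a ha) (Ne.symm hka)
      (hnlt a ha))⟩
  · simpa [hk.1] using hSh
  · rw [Finset.card_insert_of_notMem hkS, hcard]

theorem Pred.mem_hlevel {d : ℕ} (hflat : M.IsFlat (d + 1)) {h k : H} (hk : M.Pred k h) :
    ∀ {n : ℕ}, h ∈ M.Hlevel d (n + 1) → k ∈ M.Hlevel d n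
  | 0, _ => Set.mem_univ k
  | n + 1, ⟨hh, S, hSA, hcard, hS, hSh⟩ => by
    refine ⟨hk.mem_hlevel hflat hh, ?_⟩
    rcases hk.mem_or_exists_lt hflat hS hSh hcard with hkS | ⟨a, haS, hak⟩
    · exact (hSA hkS).2
    · exact (hSA haS).2.of_lt hak

theorem drank_le_of_notMem_hlevel {d n : ℕ} {h : H} (hh : h ∉ M.Hlevel d (n + 1)) :
    M.drank d h ≤ n :=
  sInf_le ⟨n, rfl, hh⟩

theorem exists_drank_eq_of_ne_top {d : ℕ} {h : H} (hh : M.drank d h ≠ ⊤) :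
    ∃ n : ℕ, M.drank d h = n ∧ h ∉ M.Hlevel d (n + 1) := by
  have hne : {N : ℕ∞ | ∃ n : ℕ, N = n ∧ h ∉ M.Hlevel d (n + 1)}.Nonempty :=
    Set.nonempty_iff_ne_empty.2 fun he => hh (by rw [drank, he, sInf_empty])
  exact csInf_mem hne

theorem Pred.drank_le {d : ℕ} (hflat : M.IsFlat (d + 1)) {h k : H} (hk : M.Pred k h) :
    M.drank d h ≤ M.drank d k + 1 := by
  by_cases htop : M.drank d k = ⊤
  · simp [htop]
  obtain ⟨n, hn, hkn⟩ := exists_drank_eq_of_ne_top htop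
  rw [hn]
  exact_mod_cast drank_le_of_notMem_hlevel fun hh => hkn (hk.mem_hlevel hflat hh)

end Halfspaces

/-- If `X` is `(d+1)`-flat (no hyperplane lies in a `(d+1)`-corner), then every hyperplane has
at most `d` predecessors, and every predecessor `k` of `h` satisfies
`d-rank(k) ≥ d-rank(h) - 1`. -/
theorem stmt9 {V H : Type*} (M : Halfspaces V H) (d : ℕ)
    (hflat : ∀ h : H, ¬ M.InCorner (d + 1) Set.univ h) (h : H) :
    (∀ S : Finset H, (∀ k ∈ S, M.Pred k h) → S.card ≤ d) ∧
    (∀ k, M.Pred k h → M.drank d h ≤ M.drank d k + 1) :=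
  ⟨fun _ hS => Halfspaces.card_le_of_forall_pred hflat hS,
    fun _ hk => hk.drank_le hflat⟩
end

section
/- Let X be a CAT(0) cube complex with basepoint x₀, let h be a hyperplane, and let x be a vertex in the outward halfspace h⁺. Then x minimizes the edge-path distance d(x₀,·) over vertices of h⁺ if and only if H_x = {h}, where H_x is the set of hyperplanes adjacent to x that separate x from x₀. -/
/-- An abstract model of the vertex set of a CAT(0) cube complex with its hyperplanes: a
connected graph `G` on the vertices `V`, a side function `side h v` (`true` iff `v` lies on the
side of `h` away from the basepoint `x0`), such that two vertices are adjacent iff exactly one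
hyperplane separates them, the graph distance is the number of separating hyperplanes, and
medians exist. -/
structure CubeGraph (V H : Type*) where
  G : SimpleGraph V
  side : H → V → Bool
  x0 : V
  basepoint : ∀ h, side h x0 = false
  sepFinite : ∀ x y : V, {h | side h x ≠ side h y}.Finite
  connected : G.Connected
  adj_iff : ∀ x y : V, G.Adj x y ↔ ∃! h : H, side h x ≠ side h y
  dist_eq : ∀ x y : V, G.dist x y = {h | side h x ≠ side h y}.ncard
  median : ∀ x y z : V, ∃ m : V, ∀ h : H,
    side h m = ((side h x && side h y) || (side h y && side h z) || (side h x && side h z))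

namespace CubeGraph

variable {V H : Type*} (M : CubeGraph V H)

/-- The set of hyperplanes adjacent to `x` (bounding an edge at `x`) which separate `x`
from the basepoint. -/
def Hx (x : V) : Set H :=
  {k | M.side k x = true ∧ ∃ y : V, M.G.Adj x y ∧ M.side k y = false}

/-- `k < h`: the outward halfspace of `k` strictly contains that of `h`. -/
def Lt (k h : H) : Prop := {v | M.side h v = true} ⊂ {v | M.side k v = true}

/-- `k` is a predecessor of `h`: `k < h` with nothing strictly between. -/
def Pred (k h : H) : Prop := M.Lt k h ∧ ¬ ∃ j, M.Lt k j ∧ M.Lt j h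

end CubeGraph

namespace CubeGraph
variable {V H : Type*} (M : CubeGraph V H)

/-- counting lemma: adjacency step toward z decreases dist by one -/
lemma dist_adj_step (x y z : V) (hadj : M.G.Adj x y) (k : H)
    (hk : M.side k x ≠ M.side k y) (hkz : M.side k z = M.side k y) :
    M.G.dist z y + 1 = M.G.dist z x := by
  obtain ⟨k₀, hk₀, huniq⟩ := (M.adj_iff x y).mp hadj
  have hkk : k = k₀ := huniq k hk
  subst hkk
  have hoff : ∀ j, j ≠ k → M.side j x = M.side j y := by
    intro j hj
    by_contra hc
    exact hj (huniq j hc)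
  have hmem : k ∈ {j | M.side j z ≠ M.side j x} := by
    simp only [Set.mem_setOf_eq, hkz]
    exact fun e => hk e.symm
  have hset : {j | M.side j z ≠ M.side j y} = {j | M.side j z ≠ M.side j x} \ {k} := by
    ext j
    rcases eq_or_ne j k with rfl | hj
    · simp [hkz]
    · simp [Set.mem_setOf_eq, hoff j hj, hj]
  rw [M.dist_eq z y, M.dist_eq z x, hset]
  exact Set.ncard_diff_singleton_add_one hmem (M.sepFinite z x)

lemma exists_adj_step (x z : V) (hne : x ≠ z) :
    ∃ y, M.G.Adj x y ∧ M.G.dist z y + 1 = M.G.dist z x := by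
  obtain ⟨p, hp⟩ := M.connected.exists_walk_length_eq_dist x z
  obtain ⟨y, hadj, q, rfl⟩ := SimpleGraph.Walk.exists_eq_cons_of_ne hne p
  refine ⟨y, hadj, ?_⟩
  have h1 : M.G.dist y z ≤ q.length := SimpleGraph.dist_le q
  have h2 : q.length + 1 = M.G.dist x z := by
    simpa [SimpleGraph.Walk.length_cons] using hp
  have h3 : M.G.dist x z ≤ M.G.dist x y + M.G.dist y z :=
    M.connected.dist_triangle
  have h4 : M.G.dist x y ≤ 1 := by
    simpa using SimpleGraph.dist_le hadj.toWalk
  have c1 : M.G.dist z y = M.G.dist y z := SimpleGraph.dist_comm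
  have c2 : M.G.dist z x = M.G.dist x z := SimpleGraph.dist_comm
  omega

lemma dist_x0 (x : V) : M.G.dist M.x0 x = {k | M.side k x = true}.ncard := by
  rw [M.dist_eq]
  congr 1
  ext k
  rw [Set.mem_setOf_eq, M.basepoint k]
  cases hb : M.side k x <;> simp [hb]

lemma Wfin (x : V) : {k | M.side k x = true}.Finite := by
  have := M.sepFinite M.x0 x
  convert this using 1
  ext k
  rw [Set.mem_setOf_eq, Set.mem_setOf_eq, M.basepoint k]
  cases hb : M.side k x <;> simp [hb]

end CubeGraph

/-- A vertex `x` of the outward halfspace `h⁺` minimises the distance to the basepoint among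
vertices of `h⁺` if and only if `H_x = {h}`. -/
theorem stmt10 {V H : Type*} (M : CubeGraph V H) (h : H) (x : V)
    (hx : M.side h x = true) :
    (∀ z : V, M.side h z = true → M.G.dist M.x0 x ≤ M.G.dist M.x0 z) ↔ M.Hx x = {h} := by
  constructor
  · intro hmin
    have hsub : M.Hx x ⊆ {h} := by
      intro k hk
      obtain ⟨hkx, y, hadj, hky⟩ := hk
      by_contra hkh
      rw [Set.mem_singleton_iff] at hkh
      have hksep : M.side k x ≠ M.side k y := by rw [hkx, hky]; simp
      have hstep : M.G.dist M.x0 y + 1 = M.G.dist M.x0 x :=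
        M.dist_adj_step x y M.x0 hadj k hksep (by rw [M.basepoint, hky])
      obtain ⟨k₀, hk₀, huniq⟩ := (M.adj_iff x y).mp hadj
      have hkk : k = k₀ := huniq k hksep
      have hhy : M.side h y = true := by
        by_contra hc
        have hhs : M.side h x ≠ M.side h y := by rw [hx]; intro e; exact hc e.symm
        have hh : h = k₀ := huniq h hhs
        exact hkh (hkk.trans hh.symm)
      have := hmin y hhy
      omega
    have hne : x ≠ M.x0 := by
      intro e
      have hb := M.basepoint h
      rw [← e, hx] at hb
      exact absurd hb (by simp)
    obtain ⟨y, hadj, hstep⟩ := M.exists_adj_step x M.x0 hne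
    obtain ⟨k₀, hk₀, huniq⟩ := (M.adj_iff x y).mp hadj
    have hk0x : M.side k₀ x = true := by
      cases e : M.side k₀ x with
      | true => rfl
      | false =>
        exfalso
        have hy : M.side k₀ y = true := by
          cases ey : M.side k₀ y with
          | true => rfl
          | false => exact absurd (e.trans ey.symm) hk₀
        have := M.dist_adj_step y x M.x0 hadj.symm k₀ (Ne.symm hk₀)
          (by rw [M.basepoint, e])
        omega
    have hk0y : M.side k₀ y = false := by
      cases ey : M.side k₀ y with
      | false => rfl
      | true => exact absurd (hk0x.trans ey.symm) hk₀
    have hmem : k₀ ∈ M.Hx x := ⟨hk0x, y, hadj, hk0y⟩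
    have hk0h : k₀ = h := hsub hmem
    exact Set.Subset.antisymm hsub (Set.singleton_subset_iff.mpr (hk0h ▸ hmem))
  · intro hHx z hz
    obtain ⟨m, hm⟩ := M.median M.x0 x z
    have hmk : ∀ k, M.side k m = (M.side k x && M.side k z) := by
      intro k; rw [hm k, M.basepoint]; simp
    have key : ∀ k, M.side k x = true → M.side k z = true := by
      by_contra hcon
      push_neg at hcon
      obtain ⟨k₁, hk1x, hk1z⟩ := hcon
      have hxm : x ≠ m := by
        intro e
        have hk1 := hmk k₁
        rw [← e, hk1x] at hk1
        simp at hk1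
        exact hk1z hk1
      obtain ⟨y, hadj, hstep⟩ := M.exists_adj_step x m hxm
      obtain ⟨k₀, hk₀, huniq⟩ := (M.adj_iff x y).mp hadj
      have hsep : M.side k₀ x ≠ M.side k₀ m := by
        intro e
        have := M.dist_adj_step y x m hadj.symm k₀ (Ne.symm hk₀) e.symm
        omega
      have hk0x : M.side k₀ x = true := by
        cases e : M.side k₀ x with
        | true => rfl
        | false =>
          exfalso
          apply hsep
          rw [e, hmk k₀, e]
          simp
      have hk0m : M.side k₀ m = false := by
        cases e : M.side k₀ m with
        | false => rfl
        | true => exact absurd (hk0x.trans e.symm) hsep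
      have hk0y : M.side k₀ y = false := by
        cases ey : M.side k₀ y with
        | false => rfl
        | true => exact absurd (hk0x.trans ey.symm) hk₀
      have hmem : k₀ ∈ M.Hx x := ⟨hk0x, y, hadj, hk0y⟩
      rw [hHx, Set.mem_singleton_iff] at hmem
      subst hmem
      rw [hmk k₀, hx, hz] at hk0m
      simp at hk0m
    rw [M.dist_x0 x, M.dist_x0 z]
    exact Set.ncard_le_ncard (fun k hk => key k hk) (M.Wfin z)
end

section
/- Let X be a CAT(0) cube complex with basepoint x₀, h a hyperplane, x the vertex of h⁺ closest to x₀, and y the vertex adjacent to x across h. Then a hyperplane k is a predecessor of h if and only if k is adjacent to y and separates y from x₀ (i.e. k ∈ H_y). -/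
namespace CubeGraph

variable {V H : Type*}

lemma flip_of_walk (M : CubeGraph V H) {k : H} {a b : V} (w : M.G.Walk a b)
    (hab : M.side k a ≠ M.side k b) :
    ∃ u u', M.G.Adj u u' ∧ M.side k u ≠ M.side k u' := by
  induction w with
  | nil => exact absurd rfl hab
  | @cons u v b' huv p ih =>
    by_cases hc : M.side k u = M.side k v
    · exact ih (fun e => hab (hc.trans e))
    · exact ⟨u, v, huv, hc⟩

lemma side_eq (M : CubeGraph V H) {j k : H} {a b : V}
    (hab : M.side k a ≠ M.side k b) (hjk : ∀ v, M.side j v = M.side k v) : j = k := by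
  obtain ⟨w⟩ := M.connected.preconnected a b
  obtain ⟨u, u', huu', hflip⟩ := M.flip_of_walk w hab
  obtain ⟨i, hi, hiu⟩ := (M.adj_iff u u').1 huu'
  have h1 : j = i := hiu j (by show M.side j u ≠ M.side j u'; rw [hjk, hjk]; exact hflip)
  have h2 : k = i := hiu k hflip
  rw [h1, h2]

lemma key_min (M : CubeGraph V H) (h : H) (x : V) (hx : M.side h x = true)
    (hmin : ∀ z : V, M.side h z = true → M.G.dist M.x0 x ≤ M.G.dist M.x0 z) :
    ∀ v : V, M.side h v = true → ∀ j, M.side j x = true → M.side j v = true := by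
  intro v hv j hjx
  obtain ⟨m, hm⟩ := M.median x v M.x0
  have hside : ∀ i, M.side i m = (M.side i x && M.side i v) := by
    intro i
    rw [hm i, M.basepoint]
    cases M.side i x <;> cases M.side i v <;> simp
  have hhm : M.side h m = true := by rw [hside, hx, hv]; rfl
  have hd := hmin m hhm
  rw [M.dist_eq, M.dist_eq] at hd
  have sA : {i | M.side i M.x0 ≠ M.side i x} = {i | M.side i x = true} := by
    ext i; simp only [Set.mem_setOf_eq, M.basepoint]
    cases M.side i x <;> simp
  have sB : {i | M.side i M.x0 ≠ M.side i m} = {i | M.side i x = true ∧ M.side i v = true} := by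
    ext i; simp only [Set.mem_setOf_eq, M.basepoint, hside]
    cases M.side i x <;> cases M.side i v <;> simp
  rw [sA, sB] at hd
  have hsub : {i | M.side i x = true ∧ M.side i v = true} ⊆ {i | M.side i x = true} :=
    fun i hi => hi.1
  have hfin : {i | M.side i x = true}.Finite := by
    rw [← sA]; exact M.sepFinite M.x0 x
  have heq := Set.eq_of_subset_of_ncard_le hsub hd hfin
  have : j ∈ {i | M.side i x = true ∧ M.side i v = true} := heq ▸ hjx
  exact this.2

end CubeGraph
/-- Let `x` be the vertex of `h⁺` closest to the basepoint and `y` the vertex adjacent to `x`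
across `h`.  Then `k` is a predecessor of `h` iff `k ∈ H_y`, i.e. `k` is adjacent to `y` and
separates `y` from the basepoint. -/
theorem stmt11 {V H : Type*} (M : CubeGraph V H) (h : H) (x y : V)
    (hx : M.side h x = true)
    (hmin : ∀ z : V, M.side h z = true → M.G.dist M.x0 x ≤ M.G.dist M.x0 z)
    (hadj : M.G.Adj x y) (hy : M.side h y = false) (k : H) :
    M.Pred k h ↔ k ∈ M.Hx y := by
  -- the unique hyperplane separating x and y is h
  have hsepxy : M.side h x ≠ M.side h y := by rw [hx, hy]; simp
  have huniq : ∀ j, M.side j x ≠ M.side j y → j = h := by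
    obtain ⟨j0, hj0, hj0u⟩ := (M.adj_iff x y).1 hadj
    intro j hj
    rw [hj0u j hj, hj0u h hsepxy]
  constructor
  · -- forward: Pred k h → k ∈ Hx y
    rintro ⟨hLt, hnb⟩
    rw [CubeGraph.Lt, Set.ssubset_def] at hLt
    obtain ⟨hsub, hne⟩ := hLt
    have hkh : k ≠ h := fun e => hne (by rw [e])
    have hkx : M.side k x = true := hsub hx
    have hky : M.side k y = true := by
      by_contra hc
      exact hkh (huniq k (by rw [hkx]; exact fun e => hc e.symm))
    -- minimizer of distance to y over the far side of k
    set S : Set ℕ := {n | ∃ v, M.side k v = false ∧ M.G.dist y v = n} with hSdef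
    have hSne : S.Nonempty := ⟨M.G.dist y M.x0, M.x0, M.basepoint k, rfl⟩
    obtain ⟨z0, hz0k, hz0d⟩ : ∃ v, M.side k v = false ∧ M.G.dist y v = sInf S :=
      Nat.sInf_mem hSne
    have hminz : ∀ v, M.side k v = false → sInf S ≤ M.G.dist y v :=
      fun v hv => Nat.sInf_le ⟨v, hv, rfl⟩
    obtain ⟨z, hzm⟩ := M.median y z0 M.x0
    have hzside : ∀ i, M.side i z = (M.side i y && M.side i z0) := by
      intro i
      rw [hzm i, M.basepoint]
      cases M.side i y <;> cases M.side i z0 <;> simp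
    have hkz : M.side k z = false := by rw [hzside, hky, hz0k]; rfl
    have hsep_sub : {i | M.side i y ≠ M.side i z} ⊆ {i | M.side i y ≠ M.side i z0} := by
      intro i hi
      simp only [Set.mem_setOf_eq, hzside i] at hi ⊢
      cases hiy : M.side i y <;> rw [hiy] at hi
      · simp at hi
      · simpa using hi
    have hdz_le : M.G.dist y z ≤ sInf S := by
      rw [M.dist_eq]
      calc {i | M.side i y ≠ M.side i z}.ncard
          ≤ {i | M.side i y ≠ M.side i z0}.ncard :=
            Set.ncard_le_ncard hsep_sub (M.sepFinite y z0)
        _ = sInf S := by rw [← M.dist_eq, hz0d]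
    have hdze : M.G.dist y z = sInf S := le_antisymm hdz_le (hminz z hkz)
    have hiii : ∀ i, M.side i y ≠ M.side i z → M.side i y = true ∧ M.side i z = false := by
      intro i hi
      rw [hzside i] at hi ⊢
      cases hiy : M.side i y <;> rw [hiy] at hi
      · simp at hi
      · refine ⟨rfl, ?_⟩
        cases hz0' : M.side i z0 <;> rw [hz0'] at hi
        · rfl
        · simp at hi
    have hk_in : M.side k y ≠ M.side k z := by rw [hky, hkz]; simp
    -- every separator of y,z equals k
    have honly : ∀ i, M.side i y ≠ M.side i z → i = k := by
      intro j hj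
      by_contra hjk
      obtain ⟨hjy, hjz⟩ := hiii j hj
      -- subclaim : j⁺ ⊆ k⁺
      have hsubjk : {v | M.side j v = true} ⊆ {v | M.side k v = true} := by
        intro v hv
        by_contra hkv
        have hkvf : M.side k v = false := by
          cases h' : M.side k v
          · rfl
          · exact absurd h' hkv
        have hjv : M.side j v = true := hv
        obtain ⟨m2, hm2⟩ := M.median z v y
        have hkm2 : M.side k m2 = false := by rw [hm2, hkz, hkvf, hky]; rfl
        have hm2sub : {i | M.side i y ≠ M.side i m2} ⊆ {i | M.side i y ≠ M.side i z} := by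
          intro i hi
          simp only [Set.mem_setOf_eq] at hi ⊢
          rw [hm2 i] at hi
          intro heq
          apply hi
          rw [← heq]
          cases M.side i y <;> cases M.side i v <;> simp
        have hge : {i | M.side i y ≠ M.side i z}.ncard ≤ {i | M.side i y ≠ M.side i m2}.ncard := by
          have h1 := hminz m2 hkm2
          rw [M.dist_eq] at h1
          rw [← M.dist_eq, hdze]
          exact h1
        have heqset := Set.eq_of_subset_of_ncard_le hm2sub hge (M.sepFinite y z)
        have hjmem : j ∈ {i | M.side i y ≠ M.side i m2} := heqset ▸ hj
        have hjm2 : M.side j m2 = true := by rw [hm2, hjz, hjv, hjy]; rfl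
        exact hjmem (by rw [hjy, hjm2])
      -- strictness of Lt k j
      have hstrict : ¬ {v | M.side k v = true} ⊆ {v | M.side j v = true} := by
        intro hc
        refine hjk (M.side_eq hk_in ?_)
        intro v
        cases hkv : M.side k v
        · cases hjv : M.side j v
          · rfl
          · exact absurd (hkv.symm.trans (hsubjk hjv)) Bool.false_ne_true
        · exact hc hkv
      -- Lt j h
      have hjh : j ≠ h := fun e => by rw [e, hy] at hjy; cases hjy
      have hjxy : M.side j x = M.side j y := by
        by_contra hc
        exact hjh (huniq j hc)
      have hLtjh : M.Lt j h := by
        rw [CubeGraph.Lt, Set.ssubset_def]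
        constructor
        · intro v hv
          exact M.key_min h x hx hmin v hv j (hjxy.trans hjy)
        · intro hc
          have h2 : M.side h y = true := hc hjy
          simp [hy] at h2
      exact hnb ⟨j, by rw [CubeGraph.Lt, Set.ssubset_def]; exact ⟨hsubjk, hstrict⟩, hLtjh⟩
    have hadjyz : M.G.Adj y z := (M.adj_iff y z).2 ⟨k, hk_in, honly⟩
    exact ⟨hky, z, hadjyz, hkz⟩
  · -- backward: k ∈ Hx y → Pred k h
    rintro ⟨hky, z, hyz, hkz⟩
    have hkh : k ≠ h := fun e => by rw [e, hy] at hky; cases hky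
    have hkxy : M.side k x = M.side k y := by
      by_contra hc
      exact hkh (huniq k hc)
    have hkx : M.side k x = true := hkxy.trans hky
    have huniq2 : ∀ i, M.side i y ≠ M.side i z → i = k := by
      obtain ⟨j0, hj0, hj0u⟩ := (M.adj_iff y z).1 hyz
      have hksep : M.side k y ≠ M.side k z := by rw [hky, hkz]; simp
      intro i hi
      rw [hj0u i hi, hj0u k hksep]
    constructor
    · rw [CubeGraph.Lt, Set.ssubset_def]
      constructor
      · intro v hv
        exact M.key_min h x hx hmin v hv k hkx
      · intro hc
        have h2 : M.side h y = true := hc hky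
        simp [hy] at h2
    · rintro ⟨j, hLkj, hLjh⟩
      rw [CubeGraph.Lt, Set.ssubset_def] at hLkj hLjh
      obtain ⟨hkj_sub, hkj_ne⟩ := hLkj
      obtain ⟨hjh_sub, hjh_ne⟩ := hLjh
      have hjx : M.side j x = true := hjh_sub hx
      have hjh : j ≠ h := fun e => hjh_ne (by rw [e])
      have hjxy : M.side j x = M.side j y := by
        by_contra hc
        exact hjh (huniq j hc)
      have hjy : M.side j y = true := hjxy.symm.trans hjx
      have hjk : j ≠ k := fun e => hkj_ne (by rw [e])
      have hjyz : M.side j y = M.side j z := by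
        by_contra hc
        exact hjk (huniq2 j hc)
      have hjz : M.side j z = true := hjyz.symm.trans hjy
      have : M.side k z = true := hkj_sub hjz
      rw [hkz] at this
      cases this
end

section
/- Let C be the cube of finitely supported [0,1]-valued functions on the hyperplane set H of a CAT(0) cube complex X with basepoint x₀. A point ξ ∈ C lies in the image of X (affinely extended embedding) if and only if ξ is intervalic (for every opposite pair h,k, ξ_h = 0 or ξ_k = 0) and actual (for every pair h < k, ξ_h = 1 or ξ_k = 0). -/
/-- An abstract model of a CAT(0) cube complex via its halfspace structure: each hyperplane `h`
has an outward halfspace `plus h` not containing the basepoint `x0`; every vertex lies outward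
of only finitely many hyperplanes; and every pairwise-consistent orientation differing from the
basepoint orientation in finitely many hyperplanes is realized by a vertex. -/
structure CubeSystem (V H : Type*) where
  plus : H → Set V
  x0 : V
  basepoint : ∀ h, x0 ∉ plus h
  plus_nonempty : ∀ h, (plus h).Nonempty
  plus_injective : ∀ h k, plus h = plus k → h = k
  vertexFinite : ∀ x : V, {h | x ∈ plus h}.Finite
  lowerFinite : ∀ h, {k | plus h ⊂ plus k}.Finite
  realize : ∀ o : H → Bool, {h | o h = true}.Finite →
    (∀ h k : H,
      ((if o h then plus h else (plus h)ᶜ) ∩ (if o k then plus k else (plus k)ᶜ)).Nonempty) →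
    ∃ x : V, ∀ h, x ∈ plus h ↔ o h = true

namespace CubeSystem

variable {V H : Type*} (M : CubeSystem V H)

/-- `h < k`: the outward halfspace of `h` strictly contains that of `k`. -/
def Lt (h k : H) : Prop := M.plus k ⊂ M.plus h

/-- Two hyperplanes are opposite if their outward halfspaces are disjoint. -/
def Opp (h k : H) : Prop := M.plus h ∩ M.plus k = ∅

/-- The canonical embedding of a vertex into the cube `C ⊆ l¹(H)`: the characteristic
function of the set of hyperplanes separating the basepoint from `x`. -/
noncomputable def vmap (x : V) : H → ℝ := fun h => by
  classical exact if x ∈ M.plus h then 1 else 0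

/-- Membership in the cube `C`: finitely supported with values in `[0,1]`. -/
def memC (ξ : H → ℝ) : Prop := (∀ h, ξ h ∈ Set.Icc (0:ℝ) 1) ∧ {h | ξ h ≠ 0}.Finite

/-- `ξ` is intervalic: for every opposite pair `h, k`, `ξ_h = 0` or `ξ_k = 0`. -/
def Intervalic (ξ : H → ℝ) : Prop := ∀ h k, M.Opp h k → ξ h = 0 ∨ ξ k = 0

/-- `ξ` is actual: for every pair `h < k`, `ξ_h = 1` or `ξ_k = 0`. -/
def Actual (ξ : H → ℝ) : Prop := ∀ h k, M.Lt h k → ξ h = 1 ∨ ξ k = 0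

end CubeSystem

namespace CubeSystem

open Classical in
/-- `ξ` lies in the image of the affinely extended embedding of `X` into the cube: there is a
cube of `X` (a vertex `x` together with a finite set `S` of hyperplanes such that every
reorientation of the hyperplanes of `S` keeping the other coordinates of `x` is realized by a
vertex) whose affine image contains `ξ`. -/
def InImage {V H : Type*} (M : CubeSystem V H) (ξ : H → ℝ) : Prop :=
  ∃ (x : V) (S : Finset H),
    (∀ σ : H → Bool, ∃ v : V, ∀ h : H,
      v ∈ M.plus h ↔ (if h ∈ S then σ h = true else x ∈ M.plus h)) ∧
    (∀ h ∉ S, ξ h = M.vmap x h) ∧ (∀ h ∈ S, ξ h ∈ Set.Icc (0:ℝ) 1)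

end CubeSystem

/-- A point `ξ` of the cube `C` lies in the image of the (affinely extended) embedding of `X`
iff `ξ` is intervalic and actual. -/
theorem stmt13 {V H : Type*} (M : CubeSystem V H) (ξ : H → ℝ) (hξ : CubeSystem.memC ξ) :
    M.InImage ξ ↔ (M.Intervalic ξ ∧ M.Actual ξ) := by

  classical
  constructor
  · rintro ⟨x, S, hcube, hoff, hIcc⟩
    have vmap01 : ∀ m, M.vmap x m = (if x ∈ M.plus m then (1:ℝ) else 0) := fun m => rfl
    constructor
    · intro h k hopp
      by_contra hc
      push_neg at hc
      obtain ⟨hh, hk⟩ := hc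
      obtain ⟨v, hv⟩ := hcube (fun _ => true)
      have key : ∀ m, ξ m ≠ 0 → v ∈ M.plus m := by
        intro m hm
        rw [hv m]
        split_ifs with hs
        · rfl
        · have := hoff m hs
          rw [vmap01 m] at this
          by_contra hx
          rw [if_neg hx] at this
          exact hm this
      have : v ∈ M.plus h ∩ M.plus k := ⟨key h hh, key k hk⟩
      rw [hopp] at this
      exact this
    · intro h k hlt
      by_contra hc
      push_neg at hc
      obtain ⟨hh, hk⟩ := hc
      have hne : h ≠ k := by
        intro he; subst he; exact (lt_irrefl _ hlt)
      obtain ⟨v, hv⟩ := hcube (fun m => decide (m = k))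
      have hvk : v ∈ M.plus k := by
        rw [hv k]
        split_ifs with hs
        · simp
        · have := hoff k hs
          rw [vmap01 k] at this
          by_contra hx
          rw [if_neg hx] at this
          exact hk this
      have hvh : v ∉ M.plus h := by
        rw [hv h]
        split_ifs with hs
        · simp [hne]
        · have := hoff h hs
          rw [vmap01 h] at this
          intro hx
          rw [if_pos hx] at this
          exact hh this
      exact hvh (hlt.subset hvk)
  · rintro ⟨hint, hact⟩
    have Sfin : {h | ξ h ≠ 0 ∧ ξ h ≠ 1}.Finite := hξ.2.subset fun h hh => hh.1
    set S : Finset H := Sfin.toFinset with hSdef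
    have hmemS : ∀ h, h ∈ S ↔ (ξ h ≠ 0 ∧ ξ h ≠ 1) := by
      intro h; simp [hSdef, Set.Finite.mem_toFinset]
    set O : (H → Bool) → H → Bool := fun σ h => if h ∈ S then σ h else decide (ξ h = 1)
      with hOdef
    have pos : ∀ σ h, O σ h = true → 0 < ξ h := by
      intro σ h hh
      simp only [hOdef] at hh
      split_ifs at hh with hs
      · have := (hmemS h).mp hs
        exact lt_of_le_of_ne (hξ.1 h).1 (Ne.symm this.1)
      · simp only [decide_eq_true_eq] at hh
        rw [hh]; norm_num
    have lt1 : ∀ σ h, O σ h = false → ξ h < 1 := by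
      intro σ h hh
      simp only [hOdef] at hh
      split_ifs at hh with hs
      · have := (hmemS h).mp hs
        exact lt_of_le_of_ne (hξ.1 h).2 this.2
      · simp only [decide_eq_false_iff_not] at hh
        exact lt_of_le_of_ne (hξ.1 h).2 hh
    have fin : ∀ σ, {h | O σ h = true}.Finite := by
      intro σ
      apply (S.finite_toSet.union hξ.2).subset
      intro h hh
      simp only [Set.mem_setOf_eq, hOdef] at hh
      split_ifs at hh with hs
      · exact Or.inl hs
      · simp only [decide_eq_true_eq] at hh
        exact Or.inr (by simp [hh])
    have cons : ∀ σ : H → Bool, ∀ h k : H,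
        ((if O σ h then M.plus h else (M.plus h)ᶜ) ∩
          (if O σ k then M.plus k else (M.plus k)ᶜ)).Nonempty := by
      intro σ h k
      have key : ∀ a b : H, O σ a = true → O σ b = false →
          (M.plus a ∩ (M.plus b)ᶜ).Nonempty := by
        intro a b ha hb
        by_contra hc
        rw [Set.not_nonempty_iff_eq_empty, ← Set.diff_eq, Set.diff_eq_empty] at hc
        rcases hc.ssubset_or_eq with hss | heq
        · have := hact b a hss
          have h1 := lt1 σ b hb
          have h2 := pos σ a ha
          rcases this with h' | h' <;> linarith
        · have := M.plus_injective a b heq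
          subst this
          rw [ha] at hb
          simp at hb
      cases hh : O σ h <;> cases hk : O σ k
      · exact ⟨M.x0, by rw [if_neg (by simp)]; exact M.basepoint h,
          by rw [if_neg (by simp)]; exact M.basepoint k⟩
      · obtain ⟨w, hw1, hw2⟩ := key k h hk hh
        exact ⟨w, by rw [if_neg (by simp)]; exact hw2, by rw [if_pos rfl]; exact hw1⟩
      · obtain ⟨w, hw1, hw2⟩ := key h k hh hk
        exact ⟨w, by rw [if_pos rfl]; exact hw1, by rw [if_neg (by simp)]; exact hw2⟩
      · rw [if_pos rfl, if_pos rfl]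
        by_contra hc
        rw [Set.not_nonempty_iff_eq_empty] at hc
        have := hint h k hc
        have p1 := pos σ h hh
        have p2 := pos σ k hk
        rcases this with h' | h' <;> linarith
    obtain ⟨x, hx⟩ := M.realize (O (fun h => decide (ξ h = 1)))
      (fin _) (cons _)
    have hx' : ∀ h, x ∈ M.plus h ↔ ξ h = 1 := by
      intro h
      rw [hx h]
      simp only [hOdef]
      split_ifs <;> simp
    refine ⟨x, S, ?_, ?_, ?_⟩
    · intro σ
      obtain ⟨v, hv⟩ := M.realize (O σ) (fin σ) (cons σ)
      refine ⟨v, fun h => ?_⟩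
      rw [hv h]
      simp only [hOdef]
      split_ifs with hs
      · rfl
      · rw [hx' h]; simp
    · intro h hs
      have : ξ h = 0 ∨ ξ h = 1 := by
        by_contra hc
        push_neg at hc
        exact hs ((hmemS h).mpr hc)
      show ξ h = if x ∈ M.plus h then (1:ℝ) else 0
      rcases this with h' | h'
      · rw [if_neg, h']
        rw [hx' h, h']; norm_num
      · rw [if_pos, h']
        rw [hx' h]; exact h'
    · intro h _
      exact hξ.1 h
end

section
/- Let X be a CAT(0) cube complex embedded as the subset A of intervalic actual points in the cube C ⊆ l¹(H). There is a retraction P : C → A which is 1-Lipschitz for the l¹-metric, restricts to the identity on A, and preserves the l¹-norm on intervalic points. -/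
namespace List

variable {α β : Type*} {f : α → β → α}

theorem foldl_congr_of_invariant {g : α → β → α} (I : α → Prop) {l : List β}
    (hI : ∀ b ∈ l, ∀ x, I x → I (f x b)) (hgf : ∀ b ∈ l, ∀ x, I x → g x b = f x b)
    {a : α} (ha : I a) : l.foldl g a = l.foldl f a := by
  induction l generalizing a with
  | nil => rfl
  | cons b l ih =>
    rw [foldl_cons, foldl_cons, hgf b mem_cons_self a ha]
    exact ih (fun c hc => hI c (mem_cons_of_mem b hc)) (fun c hc => hgf c (mem_cons_of_mem b hc))
      (hI b mem_cons_self a ha)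

theorem foldl_filter_of_invariant (I : α → Prop) (p : β → Bool) {l : List β}
    (hI : ∀ b ∈ l, ∀ x, I x → I (f x b)) (hfix : ∀ b ∈ l, p b = false → ∀ x, I x → f x b = x)
    {a : α} (ha : I a) : (l.filter p).foldl f a = l.foldl f a := by
  rw [foldl_filter]
  refine foldl_congr_of_invariant I hI (fun b hb x hx => ?_) ha
  cases hp : p b
  · rw [if_neg (by simp), hfix b hb hp x hx]
  · rw [if_pos rfl]

theorem foldl_nonexpansive {γ : Type*} [Preorder γ] (D : α → α → γ) {l : List β}
    (hD : ∀ b ∈ l, ∀ x y, D (f x b) (f y b) ≤ D x y) (a a' : α) :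
    D (l.foldl f a) (l.foldl f a') ≤ D a a' := by
  induction l generalizing a a' with
  | nil => exact le_rfl
  | cons b l ih =>
    exact (ih (fun c hc => hD c (mem_cons_of_mem b hc)) _ _).trans (hD b mem_cons_self a a')

theorem foldl_prefix_induction (I : α → Prop) (Q : β → α → Prop) {L : List β}
    (step : ∀ A b B, L = A ++ b :: B → ∀ x, I x → (∀ c ∈ A, Q c x) →
      I (f x b) ∧ ∀ c ∈ A ++ [b], Q c (f x b))
    {a : α} (ha : I a) : I (L.foldl f a) ∧ ∀ c ∈ L, Q c (L.foldl f a) := by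
  suffices key : ∀ B A x, L = A ++ B → I x → (∀ c ∈ A, Q c x) →
      I (B.foldl f x) ∧ ∀ c ∈ L, Q c (B.foldl f x) from
    key L [] a rfl ha (by simp)
  intro B
  induction B with
  | nil =>
    intro A x hL hx hA
    rw [append_nil] at hL
    exact ⟨hx, hL ▸ hA⟩
  | cons b B ih =>
    intro A x hL hx hA
    obtain ⟨hx', hA'⟩ := step A b B hL x hx hA
    exact ih (A ++ [b]) _ (by simp [hL]) hx' hA'

end List

namespace Finset

variable {ι R : Type*} [AddCommMonoid R] [DecidableEq ι]

theorem sum_eq_add_add_sum_sdiff_pair {E : Finset ι} {i j : ι} (hi : i ∈ E) (hj : j ∈ E)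
    (hne : i ≠ j) (F : ι → R) : ∑ x ∈ E, F x = F i + F j + ∑ x ∈ E \ {i, j}, F x := by
  rw [← sum_sdiff (insert_subset hi (singleton_subset_iff.2 hj)),
    sum_pair hne, add_comm]

end Finset

open Function

namespace CubeSystem

section Order

variable {V H : Type*} {M : CubeSystem V H} {h k : H}

theorem Lt.trans {j : H} (hhk : M.Lt h k) (hkj : M.Lt k j) : M.Lt h j :=
  ssubset_trans (α := Set V) hkj hhk

theorem Lt.ne (hlt : M.Lt h k) : h ≠ k := by
  rintro rfl
  exact ssubset_irrefl _ hlt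

theorem Opp.ne (hopp : M.Opp h k) : h ≠ k := by
  rintro rfl
  exact (M.plus_nonempty h).ne_empty (by rwa [Opp, Set.inter_self] at hopp)

theorem Opp.mono {h' k' : H} (hopp : M.Opp h k) (hh : M.plus h' ⊆ M.plus h)
    (hk : M.plus k' ⊆ M.plus k) : M.Opp h' k' :=
  Set.subset_eq_empty (Set.inter_subset_inter hh hk) hopp

variable (M)

noncomputable def depth (h : H) : ℕ := {k | M.Lt k h}.ncard

theorem depth_lt_depth (hlt : M.Lt h k) : M.depth h < M.depth k :=
  Set.ncard_lt_ncard ((Set.ssubset_iff_of_subset fun _ hj => Lt.trans hj hlt).2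
    ⟨h, hlt, fun hh => Lt.ne hh rfl⟩) (M.lowerFinite k)

def IsDownClosed (S : Set H) : Prop := ∀ ⦃h k⦄, M.Lt h k → k ∈ S → h ∈ S

variable {M} in
theorem IsDownClosed.union {S T : Set H} (hS : M.IsDownClosed S) (hT : M.IsDownClosed T) :
    M.IsDownClosed (S ∪ T) :=
  fun _ _ hlt hk => hk.imp (hS hlt) (hT hlt)

variable [DecidableEq H]

noncomputable def downClosure (F : Finset H) : Finset H :=
  F ∪ F.biUnion fun h => (M.lowerFinite h).toFinset

theorem mem_downClosure {F : Finset H} {x : H} :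
    x ∈ M.downClosure F ↔ x ∈ F ∨ ∃ h ∈ F, M.Lt x h := by
  simp [downClosure, Lt]

theorem subset_downClosure (F : Finset H) : F ⊆ M.downClosure F := Finset.subset_union_left

theorem isDownClosed_downClosure (F : Finset H) : M.IsDownClosed (M.downClosure F) := by
  intro h k hlt hk
  rw [Finset.mem_coe, mem_downClosure] at hk ⊢
  rcases hk with hk | ⟨j, hj, hkj⟩
  exacts [Or.inr ⟨k, hk, hlt⟩, Or.inr ⟨j, hj, hlt.trans hkj⟩]

theorem downClosure_subset {F S : Finset H} (hS : M.IsDownClosed S) (hF : F ⊆ S) :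
    M.downClosure F ⊆ S := by
  intro x hx
  rcases (M.mem_downClosure).1 hx with hx | ⟨h, hh, hxh⟩
  exacts [hF hx, hS hxh (hF hh)]

end Order

section PairMove

variable {H : Type*} [DecidableEq H]

def pairMove (φ : ℝ → ℝ → ℝ × ℝ) (f : H → ℝ) (q : H × H) : H → ℝ := fun x =>
  if x = q.1 then (φ (f q.1) (f q.2)).1 else if x = q.2 then (φ (f q.1) (f q.2)).2 else f x

variable {φ : ℝ → ℝ → ℝ × ℝ} {f g : H → ℝ} {q : H × H}

@[simp]
theorem pairMove_fst : pairMove φ f q q.1 = (φ (f q.1) (f q.2)).1 := by simp [pairMove]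

theorem pairMove_snd (hq : q.1 ≠ q.2) : pairMove φ f q q.2 = (φ (f q.1) (f q.2)).2 := by
  simp [pairMove, hq.symm]

theorem pairMove_of_ne {x : H} (h1 : x ≠ q.1) (h2 : x ≠ q.2) : pairMove φ f q x = f x := by
  simp [pairMove, h1, h2]

theorem pairMove_eq_self (h : φ (f q.1) (f q.2) = (f q.1, f q.2)) : pairMove φ f q = f := by
  funext x
  simp only [pairMove, h]
  split_ifs with h1 h2
  exacts [h1 ▸ rfl, h2 ▸ rfl, rfl]

theorem pairMove_mem_Icc
    (hφ : ∀ a b, a ∈ Set.Icc (0 : ℝ) 1 → b ∈ Set.Icc (0 : ℝ) 1 →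
      (φ a b).1 ∈ Set.Icc (0 : ℝ) 1 ∧ (φ a b).2 ∈ Set.Icc (0 : ℝ) 1)
    (hf : ∀ x, f x ∈ Set.Icc (0 : ℝ) 1) (x : H) : pairMove φ f q x ∈ Set.Icc (0 : ℝ) 1 := by
  have := hφ _ _ (hf q.1) (hf q.2)
  unfold pairMove
  split_ifs
  exacts [this.1, this.2, hf x]

theorem sum_pairMove (E : Finset H) (hq1 : q.1 ∈ E) (hq2 : q.2 ∈ E) (hq : q.1 ≠ q.2)
    (hφ : ∀ a b, (φ a b).1 + (φ a b).2 = a + b) :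
    ∑ x ∈ E, pairMove φ f q x = ∑ x ∈ E, f x := by
  rw [Finset.sum_eq_add_add_sum_sdiff_pair hq1 hq2 hq,
    Finset.sum_eq_add_add_sum_sdiff_pair hq1 hq2 hq f, pairMove_fst, pairMove_snd hq, hφ]
  congr 1
  refine Finset.sum_congr rfl fun x hx => ?_
  simp only [Finset.mem_sdiff, Finset.mem_insert, Finset.mem_singleton, not_or] at hx
  exact pairMove_of_ne hx.2.1 hx.2.2

theorem sum_abs_sub_pairMove_le (E : Finset H) (hq1 : q.1 ∈ E) (hq2 : q.2 ∈ E) (hq : q.1 ≠ q.2)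
    (hφ : ∀ a b a' b', |(φ a b).1 - (φ a' b').1| + |(φ a b).2 - (φ a' b').2| ≤
      |a - a'| + |b - b'|) :
    ∑ x ∈ E, |pairMove φ f q x - pairMove φ g q x| ≤ ∑ x ∈ E, |f x - g x| := by
  rw [Finset.sum_eq_add_add_sum_sdiff_pair hq1 hq2 hq,
    Finset.sum_eq_add_add_sum_sdiff_pair hq1 hq2 hq (fun x => |f x - g x|),
    pairMove_fst, pairMove_fst, pairMove_snd hq, pairMove_snd hq]
  refine add_le_add (hφ _ _ _ _) (Finset.sum_le_sum fun x hx => ?_)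
  simp only [Finset.mem_sdiff, Finset.mem_insert, Finset.mem_singleton, not_or] at hx
  rw [pairMove_of_ne hx.2.1 hx.2.2, pairMove_of_ne hx.2.1 hx.2.2]

end PairMove

def cancelPair (a b : ℝ) : ℝ × ℝ := (a - min a b, b - min a b)

def transferPair (a b : ℝ) : ℝ × ℝ := (min 1 (a + b), max 0 (a + b - 1))

theorem cancelPair_nonexpansive (a b a' b' : ℝ) :
    |(cancelPair a b).1 - (cancelPair a' b').1| + |(cancelPair a b).2 - (cancelPair a' b').2| ≤
      |a - a'| + |b - b'| := by
  simp only [cancelPair]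
  grind

theorem transferPair_nonexpansive (a b a' b' : ℝ) :
    |(transferPair a b).1 - (transferPair a' b').1| +
        |(transferPair a b).2 - (transferPair a' b').2| ≤ |a - a'| + |b - b'| := by
  simp only [transferPair]
  grind

theorem transferPair_add (a b : ℝ) : (transferPair a b).1 + (transferPair a b).2 = a + b := by
  simp only [transferPair]
  grind

theorem cancelPair_mem_Icc {a b : ℝ} (ha : a ∈ Set.Icc (0 : ℝ) 1) (hb : b ∈ Set.Icc (0 : ℝ) 1) :
    (cancelPair a b).1 ∈ Set.Icc (0 : ℝ) 1 ∧ (cancelPair a b).2 ∈ Set.Icc (0 : ℝ) 1 := by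
  simp only [cancelPair, Set.mem_Icc] at *
  grind

theorem transferPair_mem_Icc {a b : ℝ} (ha : a ∈ Set.Icc (0 : ℝ) 1)
    (hb : b ∈ Set.Icc (0 : ℝ) 1) :
    (transferPair a b).1 ∈ Set.Icc (0 : ℝ) 1 ∧ (transferPair a b).2 ∈ Set.Icc (0 : ℝ) 1 := by
  simp only [transferPair, Set.mem_Icc] at *
  grind

theorem cancelPair_eq_zero_or (a b : ℝ) : (cancelPair a b).1 = 0 ∨ (cancelPair a b).2 = 0 := by
  simp only [cancelPair]
  grind

theorem transferPair_eq_one_or (a b : ℝ) : (transferPair a b).1 = 1 ∨ (transferPair a b).2 = 0 := by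
  simp only [transferPair]
  grind

theorem cancelPair_eq_self {a b : ℝ} (ha : 0 ≤ a) (hb : 0 ≤ b) (h : a = 0 ∨ b = 0) :
    cancelPair a b = (a, b) := by
  simp only [cancelPair, Prod.mk.injEq]
  grind

theorem transferPair_eq_self {a b : ℝ} (ha : a ∈ Set.Icc (0 : ℝ) 1) (hb : b ∈ Set.Icc (0 : ℝ) 1)
    (h : a = 1 ∨ b = 0) : transferPair a b = (a, b) := by
  simp only [transferPair, Prod.mk.injEq, Set.mem_Icc] at *
  grind

section CubeFace

variable {H : Type*}

def cubeFace (S : Finset H) : Set (H → ℝ) :=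
  {f | (∀ x, f x ∈ Set.Icc (0 : ℝ) 1) ∧ support f ⊆ S}

variable {S T : Finset H} {f g : H → ℝ}

theorem apply_eq_zero_of_mem_cubeFace (hf : f ∈ cubeFace S) {x : H} (hx : x ∉ S) : f x = 0 :=
  notMem_support.1 fun h => hx (hf.2 h)

theorem cubeFace_mono (hST : S ⊆ T) : cubeFace S ⊆ cubeFace T :=
  fun _ hf => ⟨hf.1, hf.2.trans (Finset.coe_subset.2 hST)⟩

theorem memC_of_mem_cubeFace (hf : f ∈ cubeFace S) : memC f :=
  ⟨hf.1, S.finite_toSet.subset hf.2⟩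

theorem tsum_abs_sub_eq_sum (hf : f ∈ cubeFace S) (hg : g ∈ cubeFace S) :
    ∑' x, |f x - g x| = ∑ x ∈ S, |f x - g x| :=
  tsum_eq_sum fun x hx => by
    rw [apply_eq_zero_of_mem_cubeFace hf hx, apply_eq_zero_of_mem_cubeFace hg hx, sub_zero,
      abs_zero]

theorem tsum_abs_eq_sum (hf : f ∈ cubeFace S) : ∑' x, |f x| = ∑ x ∈ S, f x := by
  rw [tsum_eq_sum fun x hx => by rw [apply_eq_zero_of_mem_cubeFace hf hx, abs_zero]]
  exact Finset.sum_congr rfl fun x _ => abs_of_nonneg (hf.1 x).1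

variable [DecidableEq H] {q : H × H}

theorem pairMove_cancel_le (hf : ∀ x, 0 ≤ f x) (x : H) : pairMove cancelPair f q x ≤ f x := by
  have := le_min (hf q.1) (hf q.2)
  unfold pairMove cancelPair
  split_ifs with h1 h2
  · rw [h1]; linarith
  · rw [h2]; linarith
  · exact le_rfl

theorem pairMove_cancel_eq_zero (hf : ∀ x, f x ∈ Set.Icc (0 : ℝ) 1) {x : H} (hx : f x = 0) :
    pairMove cancelPair f q x = 0 :=
  le_antisymm (hx ▸ pairMove_cancel_le (fun y => (hf y).1) x)
    (pairMove_mem_Icc (fun _ _ => cancelPair_mem_Icc) hf x).1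

theorem pairMove_cancel_mem_cubeFace (hf : f ∈ cubeFace S) : pairMove cancelPair f q ∈ cubeFace S :=
  ⟨pairMove_mem_Icc (fun _ _ => cancelPair_mem_Icc) hf.1,
    fun _ hx => hf.2 fun h0 => hx (pairMove_cancel_eq_zero hf.1 h0)⟩

variable {V : Type*} {M : CubeSystem V H}

theorem exists_of_pairMove_transfer_ne_zero (hq : M.Lt q.1 q.2) (hf : f q.1 ≤ 1) {x : H}
    (hx : pairMove transferPair f q x ≠ 0) : ∃ y, f y ≠ 0 ∧ (y = x ∨ M.Lt x y) := by
  by_cases h1 : x = q.1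
  · subst h1
    rw [pairMove_fst] at hx
    by_cases h : f q.1 = 0
    · refine ⟨q.2, fun h' => hx ?_, Or.inr hq⟩
      simp [transferPair, h, h']
    · exact ⟨q.1, h, Or.inl rfl⟩
  by_cases h2 : x = q.2
  · subst h2
    rw [pairMove_snd hq.ne] at hx
    refine ⟨q.2, fun h' => hx ?_, Or.inl rfl⟩
    simp only [transferPair, h', add_zero]
    exact max_eq_left (by linarith)
  · rw [pairMove_of_ne h1 h2] at hx
    exact ⟨x, hx, Or.inl rfl⟩

theorem pairMove_transfer_mem_cubeFace (hS : M.IsDownClosed S) (hq : M.Lt q.1 q.2)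
    (hf : f ∈ cubeFace S) : pairMove transferPair f q ∈ cubeFace S := by
  refine ⟨pairMove_mem_Icc (fun _ _ => transferPair_mem_Icc) hf.1, fun x hx => ?_⟩
  obtain ⟨y, hy, rfl | hxy⟩ := exists_of_pairMove_transfer_ne_zero hq (hf.1 _).2 hx
  exacts [hf.2 hy, hS hxy (hf.2 hy)]

theorem Intervalic.pairMove_transfer (hi : M.Intervalic f) (hq : M.Lt q.1 q.2) (hf : f q.1 ≤ 1) :
    M.Intervalic (pairMove transferPair f q) := by
  have dominated : ∀ x, pairMove transferPair f q x ≠ 0 → ∃ y, f y ≠ 0 ∧ M.plus y ⊆ M.plus x := by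
    intro x hx
    obtain ⟨y, hy, rfl | hxy⟩ := exists_of_pairMove_transfer_ne_zero hq hf hx
    exacts [⟨y, hy, subset_rfl⟩, ⟨y, hy, hxy.subset⟩]
  intro a b hab
  by_contra! hne
  obtain ⟨a', ha', haa'⟩ := dominated a hne.1
  obtain ⟨b', hb', hbb'⟩ := dominated b hne.2
  exact (hi a' b' (hab.mono haa' hbb')).elim ha' hb'

end CubeFace

section Schedule

variable {V H : Type*} (M : CubeSystem V H)

noncomputable def scheduleKey (q : H × H) : Lex (ℕ × Lex (H × H)) := toLex (M.depth q.1, toLex q)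

theorem scheduleKey_injective : Injective M.scheduleKey := fun _ _ h =>
  congrArg (fun x : Lex (ℕ × Lex (H × H)) => ofLex (ofLex x).2) h

variable [LinearOrder H]

def ScheduleLE (q r : H × H) : Prop := M.scheduleKey q ≤ M.scheduleKey r

instance : IsTrans (H × H) M.ScheduleLE := ⟨fun _ _ _ => le_trans⟩

instance : Std.Antisymm M.ScheduleLE := ⟨fun _ _ h h' => M.scheduleKey_injective (le_antisymm h h')⟩

instance : Std.Total M.ScheduleLE := ⟨fun _ _ => le_total _ _⟩

noncomputable instance : DecidableRel M.ScheduleLE := fun _ _ => inferInstanceAs (Decidable (_ ≤ _))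

noncomputable def schedule (s : Finset (H × H)) : List (H × H) := s.sort M.ScheduleLE

variable {M} {s t : Finset (H × H)} {A B : List (H × H)} {q r : H × H}

theorem mem_schedule : q ∈ M.schedule s ↔ q ∈ s := Finset.mem_sort _

theorem pairwise_schedule (s : Finset (H × H)) :
    (M.schedule s).Pairwise fun q r => M.scheduleKey q < M.scheduleKey r :=
  ((Finset.pairwise_sort s _).and (Finset.sort_nodup s _)).imp fun ⟨hle, hne⟩ =>
    lt_of_le_of_ne hle (M.scheduleKey_injective.ne hne)

theorem filter_schedule (p : H × H → Bool) (hst : s ⊆ t) (hp : ∀ q ∈ t, q ∈ s ↔ p q) :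
    (M.schedule t).filter p = M.schedule s := by
  have : Std.Irrefl fun q r : H × H => M.scheduleKey q < M.scheduleKey r :=
    ⟨fun _ => lt_irrefl _⟩
  refine ((pairwise_schedule t).filter p).eq_of_mem_iff (pairwise_schedule s) fun q => ?_
  simp only [List.mem_filter, mem_schedule]
  exact ⟨fun ⟨hq, hpq⟩ => (hp q hq).2 hpq, fun hq => ⟨hst hq, (hp q (hst hq)).1 hq⟩⟩

theorem mem_of_schedule_eq (hL : M.schedule s = A ++ q :: B) : q ∈ s :=
  mem_schedule.1 (hL ▸ List.mem_append_right A List.mem_cons_self)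

theorem scheduleKey_lt_of_mem_prefix (hL : M.schedule s = A ++ q :: B) (hr : r ∈ A) :
    M.scheduleKey r < M.scheduleKey q := by
  have := pairwise_schedule (M := M) s
  rw [hL, List.pairwise_append] at this
  exact this.2.2 r hr q List.mem_cons_self

theorem mem_prefix_of_scheduleKey_lt (hL : M.schedule s = A ++ q :: B) (hr : r ∈ s)
    (hrq : M.scheduleKey r < M.scheduleKey q) : r ∈ A := by
  have hsorted := pairwise_schedule (M := M) s
  have hr' : r ∈ A ++ q :: B := hL ▸ mem_schedule.2 hr
  rw [hL, List.pairwise_append, List.pairwise_cons] at hsorted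
  rcases List.mem_append.1 hr' with hr' | hr'
  · exact hr'
  rcases List.mem_cons.1 hr' with rfl | hr'
  · exact absurd hrq (lt_irrefl _)
  · exact absurd (hsorted.2.1.1 r hr') (not_lt.2 hrq.le)

theorem scheduleKey_lt_of_depth_lt (h : M.depth r.1 < M.depth q.1) :
    M.scheduleKey r < M.scheduleKey q :=
  Prod.Lex.toLex_lt_toLex.2 (Or.inl h)

theorem depth_le_of_scheduleKey_lt (h : M.scheduleKey r < M.scheduleKey q) :
    M.depth r.1 ≤ M.depth q.1 :=
  (Prod.Lex.toLex_le_toLex.1 h.le).elim le_of_lt fun h => h.1.le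

end Schedule

section PairSets

variable {V H : Type*} (M : CubeSystem V H)

open scoped Classical in
noncomputable def cancelPairs (S : Finset H) : Finset (H × H) :=
  (S ×ˢ S).filter fun q => M.Opp q.1 q.2

open scoped Classical in
noncomputable def transferPairs (S : Finset H) : Finset (H × H) :=
  (S ×ˢ S).filter fun q => M.Lt q.1 q.2

variable {M} {S : Finset H} {q : H × H}

theorem mem_cancelPairs :
    q ∈ M.cancelPairs S ↔ (q.1 ∈ S ∧ q.2 ∈ S) ∧ M.Opp q.1 q.2 := by
  simp [cancelPairs]

theorem mem_transferPairs :
    q ∈ M.transferPairs S ↔ (q.1 ∈ S ∧ q.2 ∈ S) ∧ M.Lt q.1 q.2 := by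
  simp [transferPairs]

end PairSets

section Projection

variable {V H : Type*} (M : CubeSystem V H) [LinearOrder H]

noncomputable def cancelPhase (S : Finset H) (ξ : H → ℝ) : H → ℝ :=
  (M.schedule (M.cancelPairs S)).foldl (pairMove cancelPair) ξ

noncomputable def transferPhase (S : Finset H) (ξ : H → ℝ) : H → ℝ :=
  (M.schedule (M.transferPairs S)).foldl (pairMove transferPair) ξ

noncomputable def project (S : Finset H) (ξ : H → ℝ) : H → ℝ :=
  M.transferPhase S (M.cancelPhase S ξ)

variable {M} {S T : Finset H} {q : H × H} {ξ g : H → ℝ}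

theorem cancelPhase_spec (hξ : ξ ∈ cubeFace S) :
    M.cancelPhase S ξ ∈ cubeFace S ∧ M.Intervalic (M.cancelPhase S ξ) := by
  obtain ⟨hmem, hzero⟩ := List.foldl_prefix_induction (f := pairMove cancelPair)
    (· ∈ cubeFace S) (fun c g => g c.1 = 0 ∨ g c.2 = 0) (L := M.schedule (M.cancelPairs S))
    (fun A q B hL g hg hA => ⟨pairMove_cancel_mem_cubeFace hg, fun c hc => by
      rcases List.mem_append.1 hc with hc | hc
      · exact (hA c hc).imp (pairMove_cancel_eq_zero hg.1) (pairMove_cancel_eq_zero hg.1)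
      · rw [List.mem_singleton.1 hc, pairMove_fst,
          pairMove_snd (mem_cancelPairs.1 (mem_of_schedule_eq hL)).2.ne]
        exact cancelPair_eq_zero_or _ _⟩) hξ
  refine ⟨hmem, fun h k hhk => ?_⟩
  by_cases hh : h ∈ S
  · by_cases hk : k ∈ S
    · exact hzero (h, k) (mem_schedule.2 (mem_cancelPairs.2 ⟨⟨hh, hk⟩, hhk⟩))
    · exact Or.inr (apply_eq_zero_of_mem_cubeFace hmem hk)
  · exact Or.inl (apply_eq_zero_of_mem_cubeFace hmem hh)

/-- The transfer along `q` can only spoil an earlier-scheduled pair `c` with `c.2 = q.1`; but then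
`(c.1, q.2)` was scheduled even earlier, because its first entry is shallower than `q.1`. -/
theorem actual_pairMove_transfer_of_prefix {A B : List (H × H)}
    (hL : M.schedule (M.transferPairs S) = A ++ q :: B) (hg : ∀ x, g x ∈ Set.Icc (0 : ℝ) 1)
    (hA : ∀ c ∈ A, g c.1 = 1 ∨ g c.2 = 0) :
    ∀ c ∈ A ++ [q], pairMove transferPair g q c.1 = 1 ∨ pairMove transferPair g q c.2 = 0 := by
  obtain ⟨⟨-, hq2⟩, hq⟩ := mem_transferPairs.1 (mem_of_schedule_eq hL)
  by_cases hfix : g q.1 = 1 ∨ g q.2 = 0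
  · rw [pairMove_eq_self (transferPair_eq_self (hg _) (hg _) hfix)]
    intro c hc
    rcases List.mem_append.1 hc with hc | hc
    · exact hA c hc
    · rw [List.mem_singleton.1 hc]; exact hfix
  push Not at hfix
  intro c hc
  rcases List.mem_append.1 hc with hc | hc
  swap
  · rw [List.mem_singleton.1 hc, pairMove_fst, pairMove_snd hq.ne]
    exact transferPair_eq_one_or _ _
  obtain ⟨⟨hc1, -⟩, hc⟩ := mem_transferPairs.1 (mem_schedule.1 (hL ▸ List.mem_append_left _ hc))
  have hdepth : M.depth c.1 ≤ M.depth q.1 :=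
    depth_le_of_scheduleKey_lt (scheduleKey_lt_of_mem_prefix hL ‹c ∈ A›)
  have hc1q2 : c.1 ≠ q.2 := fun h => (h ▸ hdepth).not_gt (M.depth_lt_depth hq)
  by_cases hc1q1 : c.1 = q.1
  · have h2 : g c.2 = 0 := (hA c ‹c ∈ A›).resolve_left (hc1q1 ▸ hfix.1)
    right
    rw [pairMove_of_ne (hc1q1 ▸ hc.ne.symm) fun h => hfix.2 (h ▸ h2), h2]
  rcases hA c ‹c ∈ A› with h1 | h2
  · left
    rw [pairMove_of_ne hc1q1 hc1q2, h1]
  have hc2q2 : c.2 ≠ q.2 := fun h => hfix.2 (h ▸ h2)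
  by_cases hc2q1 : c.2 = q.1
  · have hlt : M.Lt c.1 q.1 := hc2q1 ▸ hc
    have hmem : (c.1, q.2) ∈ A := mem_prefix_of_scheduleKey_lt hL
      (mem_transferPairs.2 ⟨⟨hc1, hq2⟩, hlt.trans hq⟩)
      (scheduleKey_lt_of_depth_lt (M.depth_lt_depth hlt))
    left
    rw [pairMove_of_ne hc1q1 hc1q2]
    exact (hA _ hmem).resolve_right hfix.2
  · right
    rw [pairMove_of_ne hc2q1 hc2q2, h2]

theorem transferPhase_spec (hS : M.IsDownClosed S) (hg : g ∈ cubeFace S) (hi : M.Intervalic g) :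
    M.transferPhase S g ∈ cubeFace S ∧ M.Intervalic (M.transferPhase S g) ∧
      M.Actual (M.transferPhase S g) := by
  obtain ⟨⟨hmem, hint⟩, hact⟩ := List.foldl_prefix_induction (f := pairMove transferPair)
    (fun g => g ∈ cubeFace S ∧ M.Intervalic g) (fun c g => g c.1 = 1 ∨ g c.2 = 0)
    (L := M.schedule (M.transferPairs S))
    (fun A q B hL g hg hA =>
      have hq := (mem_transferPairs.1 (mem_of_schedule_eq hL)).2
      ⟨⟨pairMove_transfer_mem_cubeFace hS hq hg.1, hg.2.pairMove_transfer hq (hg.1.1 _).2⟩,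
        actual_pairMove_transfer_of_prefix hL hg.1.1 hA⟩) ⟨hg, hi⟩
  refine ⟨hmem, hint, fun h k hhk => ?_⟩
  by_cases hk : k ∈ S
  · exact hact (h, k) (mem_schedule.2 (mem_transferPairs.2 ⟨⟨hS hhk hk, hk⟩, hhk⟩))
  · exact Or.inr (apply_eq_zero_of_mem_cubeFace hmem hk)

theorem project_spec (hS : M.IsDownClosed S) (hξ : ξ ∈ cubeFace S) :
    M.project S ξ ∈ cubeFace S ∧ M.Intervalic (M.project S ξ) ∧ M.Actual (M.project S ξ) :=
  transferPhase_spec hS (cancelPhase_spec hξ).1 (cancelPhase_spec hξ).2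

theorem cancelPhase_eq_of_subset (hST : S ⊆ T) (hξ : ξ ∈ cubeFace S) :
    M.cancelPhase T ξ = M.cancelPhase S ξ := by
  have hfilter : (M.schedule (M.cancelPairs T)).filter (fun q => q.1 ∈ S ∧ q.2 ∈ S) =
      M.schedule (M.cancelPairs S) :=
    filter_schedule _ (fun q hq => by grind [mem_cancelPairs]) (fun q hq => by
      grind [mem_cancelPairs])
  rw [cancelPhase, cancelPhase, ← hfilter]
  refine (List.foldl_filter_of_invariant (· ∈ cubeFace S) _
    (fun _ _ _ hg => pairMove_cancel_mem_cubeFace hg) (fun q _ hq g hg => ?_) hξ).symm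
  refine pairMove_eq_self (cancelPair_eq_self (hg.1 _).1 (hg.1 _).1 ?_)
  rw [decide_eq_false_iff_not, not_and_or] at hq
  exact hq.imp (apply_eq_zero_of_mem_cubeFace hg) (apply_eq_zero_of_mem_cubeFace hg)

theorem transferPhase_eq_of_subset (hS : M.IsDownClosed S) (hST : S ⊆ T) (hg : g ∈ cubeFace S) :
    M.transferPhase T g = M.transferPhase S g := by
  have hfilter : (M.schedule (M.transferPairs T)).filter (fun q => q.1 ∈ S ∧ q.2 ∈ S) =
      M.schedule (M.transferPairs S) :=
    filter_schedule _ (fun q hq => by grind [mem_transferPairs]) (fun q hq => by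
      grind [mem_transferPairs])
  rw [transferPhase, transferPhase, ← hfilter]
  refine (List.foldl_filter_of_invariant (· ∈ cubeFace S) _
    (fun q hq _ hf => pairMove_transfer_mem_cubeFace hS
      (mem_transferPairs.1 (mem_schedule.1 hq)).2 hf) (fun q hqT hq f hf => ?_) hg).symm
  have hq2 : q.2 ∉ S := fun h2 => by
    have h1 : q.1 ∈ S := hS (mem_transferPairs.1 (mem_schedule.1 hqT)).2 h2
    simp [h1, h2] at hq
  exact pairMove_eq_self (transferPair_eq_self (hf.1 _) (hf.1 _)
    (Or.inr (apply_eq_zero_of_mem_cubeFace hf hq2)))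

theorem project_eq_of_subset (hS : M.IsDownClosed S) (hST : S ⊆ T) (hξ : ξ ∈ cubeFace S) :
    M.project T ξ = M.project S ξ := by
  rw [project, project, cancelPhase_eq_of_subset hST hξ,
    transferPhase_eq_of_subset hS hST (cancelPhase_spec hξ).1]

theorem cancelPhase_eq_self (hξ : ∀ x, 0 ≤ ξ x) (hi : M.Intervalic ξ) : M.cancelPhase S ξ = ξ :=
  List.foldlRecOn (motive := (· = ξ)) _ _ rfl fun g hg q hq => by
    subst hg
    exact pairMove_eq_self (cancelPair_eq_self (hξ _) (hξ _)
      (hi _ _ (mem_cancelPairs.1 (mem_schedule.1 hq)).2))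

theorem transferPhase_eq_self (hξ : ∀ x, ξ x ∈ Set.Icc (0 : ℝ) 1) (ha : M.Actual ξ) :
    M.transferPhase S ξ = ξ :=
  List.foldlRecOn (motive := (· = ξ)) _ _ rfl fun g hg q hq => by
    subst hg
    exact pairMove_eq_self (transferPair_eq_self (hξ _) (hξ _)
      (ha _ _ (mem_transferPairs.1 (mem_schedule.1 hq)).2))

theorem project_eq_self (hξ : ∀ x, ξ x ∈ Set.Icc (0 : ℝ) 1) (hi : M.Intervalic ξ)
    (ha : M.Actual ξ) : M.project S ξ = ξ := by
  rw [project, cancelPhase_eq_self (fun x => (hξ x).1) hi, transferPhase_eq_self hξ ha]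

theorem sum_project (hξ : ∀ x, 0 ≤ ξ x) (hi : M.Intervalic ξ) :
    ∑ x ∈ S, M.project S ξ x = ∑ x ∈ S, ξ x := by
  rw [project, cancelPhase_eq_self hξ hi, transferPhase]
  refine List.foldlRecOn (motive := fun g : H → ℝ => ∑ x ∈ S, g x = ∑ x ∈ S, ξ x) _ _ rfl
    fun g hg q hq => ?_
  obtain ⟨⟨h1, h2⟩, hq⟩ := mem_transferPairs.1 (mem_schedule.1 hq)
  rw [sum_pairMove S h1 h2 hq.ne transferPair_add, hg]

theorem sum_abs_sub_project_le (S : Finset H) (ξ η : H → ℝ) :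
    ∑ x ∈ S, |M.project S ξ x - M.project S η x| ≤ ∑ x ∈ S, |ξ x - η x| := by
  let D : (H → ℝ) → (H → ℝ) → ℝ := fun f g => ∑ x ∈ S, |f x - g x|
  refine (List.foldl_nonexpansive D (fun q hq f g => ?_) _ _).trans
    (List.foldl_nonexpansive D (fun q hq f g => ?_) _ _)
  · obtain ⟨⟨h1, h2⟩, hq⟩ := mem_transferPairs.1 (mem_schedule.1 hq)
    exact sum_abs_sub_pairMove_le S h1 h2 hq.ne transferPair_nonexpansive
  · obtain ⟨⟨h1, h2⟩, hq⟩ := mem_cancelPairs.1 (mem_schedule.1 hq)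
    exact sum_abs_sub_pairMove_le S h1 h2 hq.ne cancelPair_nonexpansive

variable (M) in
open scoped Classical in
noncomputable def projection (ξ : H → ℝ) : H → ℝ :=
  if hξ : (support ξ).Finite then M.project (M.downClosure hξ.toFinset) ξ else ξ

theorem exists_isDownClosed_mem_cubeFace (hξ : memC ξ) :
    ∃ S : Finset H, M.IsDownClosed S ∧ ξ ∈ cubeFace S :=
  ⟨M.downClosure hξ.2.toFinset, M.isDownClosed_downClosure _, hξ.1,
    fun _ hx => M.subset_downClosure _ (hξ.2.mem_toFinset.2 hx)⟩

theorem projection_eq_project (hS : M.IsDownClosed S) (hξ : ξ ∈ cubeFace S) :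
    M.projection ξ = M.project S ξ := by
  have hfin : (support ξ).Finite := S.finite_toSet.subset hξ.2
  rw [projection, dif_pos hfin]
  refine (project_eq_of_subset (M.isDownClosed_downClosure _)
    (M.downClosure_subset hS fun x hx => hξ.2 (hfin.mem_toFinset.1 hx))
    ⟨hξ.1, fun x hx => M.subset_downClosure _ (hfin.mem_toFinset.2 hx)⟩).symm

end Projection

end CubeSystem

/-- The Projection Theorem: there is a retraction `P` of the cube `C` onto the set `A` of
intervalic actual points (the embedded image of `X`) which is 1-Lipschitz for the `l¹`-metric,
restricts to the identity on `A`, and preserves the `l¹`-norm on intervalic points. -/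
theorem stmt14 {V H : Type*} (M : CubeSystem V H) :
    ∃ P : (H → ℝ) → (H → ℝ),
      (∀ ξ, CubeSystem.memC ξ → (CubeSystem.memC (P ξ) ∧ M.Intervalic (P ξ) ∧ M.Actual (P ξ))) ∧
      (∀ ξ η, CubeSystem.memC ξ → CubeSystem.memC η →
        ∑' h : H, |P ξ h - P η h| ≤ ∑' h : H, |ξ h - η h|) ∧
      (∀ ξ, CubeSystem.memC ξ → M.Intervalic ξ → M.Actual ξ → P ξ = ξ) ∧
      (∀ ξ, CubeSystem.memC ξ → M.Intervalic ξ → ∑' h : H, |P ξ h| = ∑' h : H, |ξ h|) := by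
  open CubeSystem in
  -- any linear order on `H` will do: it only breaks ties in the transfer schedule
  let : LinearOrder H := IsWellOrder.linearOrder WellOrderingRel
  refine ⟨M.projection, fun ξ hξ => ?_, fun ξ η hξ hη => ?_, fun ξ hξ hi ha => ?_,
    fun ξ hξ hi => ?_⟩ <;> obtain ⟨S, hS, hξS⟩ := exists_isDownClosed_mem_cubeFace (M := M) hξ
  · obtain ⟨hP, hPi, hPa⟩ := project_spec hS hξS
    rw [projection_eq_project hS hξS]
    exact ⟨memC_of_mem_cubeFace hP, hPi, hPa⟩
  · obtain ⟨T, hT, hηT⟩ := exists_isDownClosed_mem_cubeFace (M := M) hη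
    have hU : M.IsDownClosed ↑(S ∪ T) := by rw [Finset.coe_union]; exact hS.union hT
    have hξU : ξ ∈ cubeFace (S ∪ T) := cubeFace_mono Finset.subset_union_left hξS
    have hηU : η ∈ cubeFace (S ∪ T) := cubeFace_mono Finset.subset_union_right hηT
    rw [projection_eq_project hU hξU, projection_eq_project hU hηU,
      tsum_abs_sub_eq_sum hξU hηU,
      tsum_abs_sub_eq_sum (project_spec hU hξU).1 (project_spec hU hηU).1]
    exact sum_abs_sub_project_le _ _ _
  · rw [projection_eq_project hS hξS]
    exact project_eq_self hξS.1 hi ha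
  · rw [projection_eq_project hS hξS, tsum_abs_eq_sum (project_spec hS hξS).1,
      tsum_abs_eq_sum hξS]
    exact sum_project (fun x => (hξS.1 x).1) hi
end

section
/- Let X be a CAT(0) cube complex whose hyperplanes carry an l-controlled colouring c : H → {0,1} (no monochromatic inward geodesic of length > l). Let π : X → X̂ be the canonical quotient map to the cube complex X̂ whose hyperplanes are the 0-coloured ones. Then π is cobornologous on vertices: for every R, if d(π(x),π(y)) ≤ R for vertices x,y, then d(x,y) ≤ (l+1)(R+2). -/
namespace CubeGraph

variable {V H : Type*} (M : CubeGraph V H)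

/-- An inward edge path: each edge moves strictly closer to the basepoint (hence it is a
geodesic). -/
def IsInward {n : ℕ} (v : Fin (n + 1) → V) : Prop :=
  (∀ i : Fin n, M.G.Adj (v i.castSucc) (v i.succ)) ∧
    ∀ i : Fin n, M.G.dist M.x0 (v i.succ) < M.G.dist M.x0 (v i.castSucc)

/-- A path is monochromatic for the colouring `c` if all hyperplanes it crosses have the same
colour. -/
def IsMono (c : H → Bool) {n : ℕ} (v : Fin (n + 1) → V) : Prop :=
  ∃ b : Bool, ∀ i : Fin n, ∀ h : H,
    M.side h (v i.castSucc) ≠ M.side h (v i.succ) → c h = b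

/-- `c` is an `l`-controlled colouring: no monochromatic inward geodesic has length `> l`. -/
def Controlled (l : ℕ) (c : H → Bool) : Prop :=
  ∀ n : ℕ, ∀ v : Fin (n + 1) → V, M.IsInward v → M.IsMono c v → n ≤ l

end CubeGraph

/-!
The median `m` of `x`, `y` and the basepoint lies on a geodesic from `x` to `y` and between the
basepoint and each of `x`, `y`, so both `d(x,y)` and the number of 0-coloured hyperplanes
separating `x, y` split as a sum over `x, m` and `m, y`. A geodesic from `x` down to `m` is
inward, so by `l`-control each `l + 1` consecutive edges of it cross a 0-coloured hyperplane;
this gives `d(x,m) ≤ (l+1)(d(π x, π m) + 1)`, and likewise for `y`.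
-/

namespace SimpleGraph.Walk

variable {V : Type*} {G : SimpleGraph V} {u v : V}

lemma dist_getVert_getVert_le (p : G.Walk u v) {i j : ℕ} (hij : i ≤ j) :
    G.dist (p.getVert i) (p.getVert j) ≤ j - i := by
  have h : G.dist (p.getVert i) ((p.drop i).getVert (j - i)) ≤ j - i :=
    (dist_le ((p.drop i).take (j - i))).trans (by simp)
  rwa [drop_getVert, Nat.add_sub_cancel' hij] at h

lemma dist_getVert_getVert {p : G.Walk u v} (hp : p.length = G.dist u v) {i j : ℕ}
    (hij : i ≤ j) (hj : j ≤ p.length) :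
    G.dist (p.getVert i) (p.getVert j) = j - i := by
  have hui := p.getVert_zero ▸ p.dist_getVert_getVert_le (Nat.zero_le i)
  have hjv := p.getVert_length ▸ p.dist_getVert_getVert_le hj
  have hij' := p.dist_getVert_getVert_le hij
  have h₁ := (p.take i).reachable.dist_triangle_left v
  have h₂ := (p.drop j).reachable.dist_triangle_right (p.getVert i)
  omega

end SimpleGraph.Walk

namespace CubeGraph

variable {V H : Type*} (M : CubeGraph V H)

def sep (x y : V) : Set H := {h | M.side h x ≠ M.side h y}

def Between (a b c : V) : Prop := ∀ h, M.side h b = M.side h a ∨ M.side h b = M.side h c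

def Below (w x : V) : Prop := ∀ h, M.side h w = true → M.side h x = true

variable {M}

lemma dist_eq_ncard_sep (x y : V) : M.G.dist x y = (M.sep x y).ncard := M.dist_eq x y

lemma sep_comm (x y : V) : M.sep x y = M.sep y x := by
  ext h
  exact ne_comm

lemma ncard_sep_inter_add_of_between {a b c : V} (hb : M.Between a b c) (S : Set H) :
    (M.sep a b ∩ S).ncard + (M.sep b c ∩ S).ncard = (M.sep a c ∩ S).ncard := by
  have hsplit : M.sep a c ∩ S = (M.sep a b ∩ S) ∪ (M.sep b c ∩ S) := by
    ext h
    simp only [sep, Set.mem_inter_iff, Set.mem_union, Set.mem_ofPred_eq]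
    rcases hb h with hb | hb <;> simp [hb]
  have hdisj : Disjoint (M.sep a b ∩ S) (M.sep b c ∩ S) := by
    refine Set.disjoint_left.mpr fun h ⟨hab, _⟩ ⟨hbc, _⟩ => ?_
    rcases hb h with hb | hb
    · exact hab hb.symm
    · exact hbc hb
  rw [hsplit, Set.ncard_union_eq hdisj ((M.sepFinite a b).subset Set.inter_subset_left)
    ((M.sepFinite b c).subset Set.inter_subset_left)]

lemma dist_add_dist_eq_iff_between {a b c : V} :
    M.G.dist a b + M.G.dist b c = M.G.dist a c ↔ M.Between a b c := by
  refine ⟨fun hsum h => ?_, fun hb => ?_⟩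
  · -- A hyperplane separating `b` from both `a` and `c` is counted twice on the left only.
    by_contra! hh
    have hsub : M.sep a c ⊆ (M.sep a b ∪ M.sep b c) \ {h} := by
      rintro k hk
      refine ⟨?_, ?_⟩
      · by_contra! hk'
        simp only [sep, Set.mem_union, Set.mem_ofPred_eq, not_or, not_not] at hk hk'
        exact hk (hk'.1.trans hk'.2)
      · rintro rfl
        revert hk hh
        simp only [sep, Set.mem_ofPred_eq]
        cases M.side k a <;> cases M.side k b <;> cases M.side k c <;> simp
    have hfin := (M.sepFinite a b).union (M.sepFinite b c)
    have hlt := (Set.ncard_le_ncard hsub hfin.sdiff).trans_lt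
      (Set.ncard_sdiff_singleton_lt_of_mem (Or.inl (Ne.symm hh.1)) hfin)
    have := Set.ncard_union_le (M.sep a b) (M.sep b c)
    simp only [dist_eq_ncard_sep] at hsum
    omega
  · simpa [dist_eq_ncard_sep] using ncard_sep_inter_add_of_between hb Set.univ

lemma Below.between_basepoint {w x : V} (hw : M.Below w x) : M.Between M.x0 w x := by
  intro h
  rw [M.basepoint h]
  cases hwh : M.side h w
  · exact Or.inl rfl
  · exact Or.inr (hw h hwh).symm

lemma Between.below {a b c : V} (hb : M.Between a b c) (hca : M.Below c a) :
    M.Below c b ∧ M.Below b a := by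
  refine ⟨fun h hc => ?_, fun h hbh => ?_⟩ <;> rcases hb h with e | e
  · rw [e]; exact hca h hc
  · rw [e]; exact hc
  · rwa [← e]
  · exact hca h (e ▸ hbh)

lemma dist_basepoint_lt {v w : V} (hw : M.Below w v) (hadj : M.G.Adj v w) :
    M.G.dist M.x0 w < M.G.dist M.x0 v := by
  have h := dist_add_dist_eq_iff_between.mpr hw.between_basepoint
  rw [SimpleGraph.dist_eq_one_iff_adj.mpr hadj.symm] at h
  omega

lemma exists_median_basepoint (x y : V) :
    ∃ m, M.Between x m y ∧ M.Below m x ∧ M.Below m y := by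
  obtain ⟨m, hm⟩ := M.median x y M.x0
  have hside : ∀ h, M.side h m = (M.side h x && M.side h y) := fun h => by
    rw [hm h, M.basepoint h]
    cases M.side h x <;> cases M.side h y <;> rfl
  refine ⟨m, fun h => ?_, fun h => ?_, fun h => ?_⟩ <;> rw [hside h] <;>
    cases M.side h x <;> cases M.side h y <;> simp

lemma mem_sep_of_between {a b c d : V} {h : H} (habc : M.Between a b c) (hbcd : M.Between b c d)
    (hh : h ∈ M.sep b c) : h ∈ M.sep a d := by
  have hba : M.side h b = M.side h a := (habc h).resolve_right hh
  have hcd : M.side h c = M.side h d := (hbcd h).resolve_left (Ne.symm hh)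
  simpa only [sep, Set.mem_ofPred_eq, ← hba, ← hcd] using hh

section Geodesic

variable {x z : V} {p : M.G.Walk x z}

lemma between_getVert (hp : p.length = M.G.dist x z) {i j k : ℕ} (hij : i ≤ j) (hjk : j ≤ k)
    (hk : k ≤ p.length) :
    M.Between (p.getVert i) (p.getVert j) (p.getVert k) := by
  rw [← dist_add_dist_eq_iff_between, p.dist_getVert_getVert hp hij (hjk.trans hk),
    p.dist_getVert_getVert hp hjk hk, p.dist_getVert_getVert hp (hij.trans hjk) hk]
  omega

lemma below_getVert (hp : p.length = M.G.dist x z) (hzx : M.Below z x) {i j : ℕ} (hij : i ≤ j)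
    (hj : j ≤ p.length) :
    M.Below (p.getVert j) (p.getVert i) := by
  have hzi : M.Below z (p.getVert i) := by
    have h := between_getVert hp (Nat.zero_le i) (hij.trans hj) le_rfl
    rw [p.getVert_zero, p.getVert_length] at h
    exact (h.below hzx).1
  have h := between_getVert hp hij hj le_rfl
  rw [p.getVert_length] at h
  exact (h.below hzi).2

lemma isInward_getVert (hp : p.length = M.G.dist x z) (hzx : M.Below z x) {k : ℕ}
    (hk : k ≤ p.length) :
    M.IsInward (fun i : Fin (k + 1) => p.getVert i) := by
  have hstep (i : Fin k) : M.G.Adj (p.getVert i) (p.getVert (i + 1)) :=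
    p.adj_getVert_succ (by omega)
  refine ⟨fun i => ?_, fun i => ?_⟩ <;> simp only [Fin.val_castSucc, Fin.val_succ]
  · exact hstep i
  · exact dist_basepoint_lt (below_getVert hp hzx (Nat.le_succ _) (by omega)) (hstep i)

end Geodesic

lemma Controlled.exists_crossing_false {l : ℕ} {c : H → Bool} (hc : M.Controlled l c)
    {v : Fin (l + 1 + 1) → V} (hv : M.IsInward v) :
    ∃ i : Fin (l + 1), ∃ h, h ∈ M.sep (v i.castSucc) (v i.succ) ∧ c h = false := by
  by_contra! hall
  have := hc _ v hv ⟨true, fun i h hh => by simpa using hall i h hh⟩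
  omega

theorem ncard_sep_le_of_below {l : ℕ} {c : H → Bool} (hc : M.Controlled l c) {x z : V}
    (hzx : M.Below z x) :
    (M.sep x z).ncard ≤ (l + 1) * ((M.sep x z ∩ {h | c h = false}).ncard + 1) := by
  induction hn : (M.sep x z).ncard using Nat.strong_induction_on generalizing x with
  | _ n ih =>
  by_cases hnl : n ≤ l
  · nlinarith
  obtain ⟨p, hp⟩ := M.connected.exists_walk_length_eq_dist x z
  have hlen : p.length = n := by rw [hp, dist_eq_ncard_sep, hn]
  obtain ⟨i, h, hcross, hcol⟩ :=
    hc.exists_crossing_false (isInward_getVert hp hzx (k := l + 1) (by omega))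
  set w := p.getVert (l + 1)
  have hxwz : M.Between x w z := by
    simpa only [p.getVert_zero, p.getVert_length] using
      between_getVert hp (Nat.zero_le (l + 1)) (by omega) le_rfl
  have hhw : h ∈ M.sep x w := by
    have hi := i.isLt
    have := mem_sep_of_between (between_getVert hp (Nat.zero_le i) (Nat.le_succ i) (by omega))
      (between_getVert hp (Nat.le_succ i) (k := l + 1) (by omega) (by omega)) hcross
    simpa only [p.getVert_zero] using this
  have hxw : (M.sep x w).ncard ≤ l + 1 := by
    rw [← dist_eq_ncard_sep, ← p.getVert_zero]
    exact (p.dist_getVert_getVert_le (Nat.zero_le _)).trans (by omega)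
  have hxw_pos : 0 < (M.sep x w).ncard := (Set.ncard_pos (M.sepFinite x w)).mpr ⟨h, hhw⟩
  have hxw_false_pos : 0 < (M.sep x w ∩ {h | c h = false}).ncard :=
    (Set.ncard_pos ((M.sepFinite x w).subset Set.inter_subset_left)).mpr ⟨h, hhw, hcol⟩
  have hsplit := ncard_sep_inter_add_of_between hxwz Set.univ
  have hsplit0 := ncard_sep_inter_add_of_between hxwz {h | c h = false}
  simp only [Set.inter_univ] at hsplit
  have hwz := ih _ (by omega) (hxwz.below hzx).1 rfl
  nlinarith

end CubeGraph

/-- If `c` is an `l`-controlled colouring (0-coloured = `false`), then the canonical quotient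
map `π` to the cube complex on the 0-coloured hyperplanes is cobornologous on vertices: since
`d(π x, π y)` is the number of 0-coloured hyperplanes separating `x, y`, if this is at most `R`
then `d(x,y) ≤ (l+1)(R+2)`. -/
theorem stmt16 {V H : Type*} (M : CubeGraph V H) (l : ℕ) (c : H → Bool)
    (hc : M.Controlled l c) (x y : V) (R : ℕ)
    (hR : {h : H | M.side h x ≠ M.side h y ∧ c h = false}.ncard ≤ R) :
    {h : H | M.side h x ≠ M.side h y}.ncard ≤ (l + 1) * (R + 2) := by
  change (M.sep x y ∩ {h | c h = false}).ncard ≤ R at hR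
  change (M.sep x y).ncard ≤ _
  obtain ⟨m, hxmy, hmx, hmy⟩ := M.exists_median_basepoint x y
  have hx := CubeGraph.ncard_sep_le_of_below hc hmx
  have hy := CubeGraph.ncard_sep_le_of_below hc hmy
  rw [CubeGraph.sep_comm y m] at hy
  have hsplit := CubeGraph.ncard_sep_inter_add_of_between hxmy Set.univ
  have hsplit0 := CubeGraph.ncard_sep_inter_add_of_between hxmy {h | c h = false}
  simp only [Set.inter_univ] at hsplit
  nlinarith
end

section
/- Define a colouring c of the hyperplanes of a finite-dimensional CAT(0) cube complex inductively by: c(h) = 1 if all r-maximal predecessors of h are coloured 0, and c(h) = 0 otherwise, where r is the (lexicographically ordered) rank-vector. Then: (1) if h has a predecessor of the same colour as h, it also has a predecessor of the opposite colour; and (2) if h has a predecessor k with r(k) = r(h), then c(k) ≠ c(h). -/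
/-! If `c h = 1`, every `r`-maximal predecessor has colour `0`, and one exists by finiteness;
if `c h = 0`, some `r`-maximal predecessor has colour `1`. A predecessor with the rank-vector of `h` is `r`-maximal
by monotonicity, and every `r`-maximal predecessor then has that same rank-vector, so by
uniqueness it is the only one and its colour is opposite to that of `h`. -/

noncomputable instance lexNatLinearOrder (n : ℕ) : LinearOrder (Lex (Fin n → ℕ)) :=
  letI h : WellFoundedLT (Fin n) := inferInstance
  @Pi.Lex.linearOrder (Fin n) (fun _ => ℕ) _ h _

section Colouring

variable {H β : Type*} [LinearOrder β] (pred : H → H → Prop) (r : H → β)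

def IsRMaximalPred (k h : H) : Prop :=
  pred k h ∧ ∀ j, pred j h → r j ≤ r k

variable {pred r}

lemma exists_isRMaximalPred {k h : H} (hfin : {k | pred k h}.Finite) (hk : pred k h) :
    ∃ m, IsRMaximalPred pred r m h :=
  let ⟨m, hm, hmax⟩ := Set.exists_max_image _ r hfin ⟨k, hk⟩
  ⟨m, hm, hmax⟩

lemma isRMaximalPred_of_rank_eq {k h : H} (hmono : ∀ j, pred j h → r j ≤ r h)
    (hk : pred k h) (hrk : r k = r h) : IsRMaximalPred pred r k h :=
  ⟨hk, fun j hj => hrk ▸ hmono j hj⟩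

lemma IsRMaximalPred.rank_eq {k m h : H} (hm : IsRMaximalPred pred r m h)
    (hmono : ∀ j, pred j h → r j ≤ r h) (hk : pred k h) (hrk : r k = r h) : r m = r h :=
  le_antisymm (hmono m hm.1) (hrk ▸ hm.2 k hk)

variable {c : H → Bool}

lemma colour_eq_false_iff
    (hrec : ∀ h, c h = true ↔ ∀ k, IsRMaximalPred pred r k h → c k = false) (h : H) :
    c h = false ↔ ∃ k, IsRMaximalPred pred r k h ∧ c k = true := by
  simpa using (hrec h).not

lemma exists_pred_colour_ne
    (hrec : ∀ h, c h = true ↔ ∀ k, IsRMaximalPred pred r k h → c k = false)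
    {k h : H} (hfin : {k | pred k h}.Finite) (hk : pred k h) :
    ∃ j, pred j h ∧ c j ≠ c h := by
  cases hch : c h with
  | true =>
    obtain ⟨m, hm⟩ := exists_isRMaximalPred (r := r) hfin hk
    exact ⟨m, hm.1, by simp [(hrec h).1 hch m hm]⟩
  | false =>
    obtain ⟨m, hm, hcm⟩ := (colour_eq_false_iff hrec h).1 hch
    exact ⟨m, hm.1, by simp [hcm]⟩

lemma colour_ne_of_rank_eq
    (hrec : ∀ h, c h = true ↔ ∀ k, IsRMaximalPred pred r k h → c k = false)
    {k h : H} (hmono : ∀ j, pred j h → r j ≤ r h)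
    (huniq : ∀ k j, pred k h → pred j h → r k = r h → r j = r h → k = j)
    (hk : pred k h) (hrk : r k = r h) : c k ≠ c h := by
  cases hch : c h with
  | true => simp [(hrec h).1 hch k (isRMaximalPred_of_rank_eq hmono hk hrk)]
  | false =>
    obtain ⟨m, hm, hcm⟩ := (colour_eq_false_iff hrec h).1 hch
    obtain rfl : m = k := huniq m k hm.1 hk (hm.rank_eq hmono hk hrk) hrk
    simp [hcm]

end Colouring

theorem stmt18_general {H : Type*} (D : ℕ) (lt : H → H → Prop)
    (r : H → Lex (Fin (D - 1) → ℕ))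
    (pred : H → H → Prop)
    (hpred : ∀ k h, pred k h ↔ (lt k h ∧ ¬ ∃ j, lt k j ∧ lt j h))
    (hfin : ∀ h, {k | pred k h}.Finite)
    (hmono : ∀ k h, lt k h → r k ≤ r h)
    (huniq : ∀ h k j, pred k h → pred j h → r k = r h → r j = r h → k = j)
    (c : H → Bool)
    (hrec : ∀ h, c h = true ↔
      ∀ k, (pred k h ∧ ∀ j, pred j h → r j ≤ r k) → c k = false) :
    (∀ h, (∃ k, pred k h ∧ c k = c h) → ∃ j, pred j h ∧ c j ≠ c h) ∧
    (∀ h k, pred k h → r k = r h → c k ≠ c h) := by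
  have hmono_pred : ∀ h j, pred j h → r j ≤ r h := fun h j hj =>
    hmono j h ((hpred j h).1 hj).1
  refine ⟨fun h ⟨k, hk, _⟩ => exists_pred_colour_ne hrec (hfin h) hk, fun h k hk hrk => ?_⟩
  exact colour_ne_of_rank_eq hrec (hmono_pred h) (huniq h) hk hrk

/-- Abstractly: `H` is the set of hyperplanes of a finite-dimensional CAT(0) cube complex with
the strict order `lt` ("separates the basepoint from"), `r` is the rank-vector function with
values in `ℕ^{D-1}` ordered lexicographically, which is monotonic and such that each hyperplane
has finitely many predecessors and at most one predecessor of the same rank-vector.  If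
`c : H → Bool` satisfies the defining recurrence of the colouring — `c h = 1` iff all
`r`-maximal predecessors of `h` are coloured `0` — then: (1) if `h` has a predecessor of its
own colour it also has one of the opposite colour; (2) a predecessor with the same rank-vector
as `h` has the opposite colour. -/
theorem stmt18 {H : Type*} (D : ℕ) (lt : H → H → Prop)
    (hirr : ∀ h, ¬ lt h h) (htrans : ∀ {a b c}, lt a b → lt b c → lt a c)
    (r : H → Lex (Fin (D - 1) → ℕ))
    (pred : H → H → Prop)
    (hpred : ∀ k h, pred k h ↔ (lt k h ∧ ¬ ∃ j, lt k j ∧ lt j h))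
    (hfin : ∀ h, {k | pred k h}.Finite)
    (hmono : ∀ k h, lt k h → r k ≤ r h)
    (huniq : ∀ h k j, pred k h → pred j h → r k = r h → r j = r h → k = j)
    (c : H → Bool)
    (hrec : ∀ h, c h = true ↔
      ∀ k, (pred k h ∧ ∀ j, pred j h → r j ≤ r k) → c k = false) :
    (∀ h, (∃ k, pred k h ∧ c k = c h) → ∃ j, pred j h ∧ c j ≠ c h) ∧
    (∀ h k, pred k h → r k = r h → c k ≠ c h) :=
  stmt18_general D lt r pred hpred hfin hmono huniq c hrec
end

section
/- Let X be a CAT(0) cube complex of dimension D and flatness f. Suppose every monochromatic inward geodesic s has its crossed hyperplanes partitioned into at most D chains, and along any chain in a totally bound inward geodesic the rank-vector takes at most 3^{f-1} values, while consecutive elements of a maximal chain in a monochromatic geodesic have strictly decreasing rank-vectors. Then no monochromatic inward geodesic has length greater than 3^{f-1}·D; i.e. the colouring is 3^{f-1}D-controlled. -/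
open Finset

section StrictRelation

variable {H α : Type*} {lt : H → H → Prop}

lemma exists_maximal_chain_superset {S C : Finset H} (hCS : C ⊆ S) (hC : IsChain lt (C : Set H)) :
    ∃ M, C ⊆ M ∧ Maximal (fun M : Finset H => M ⊆ S ∧ IsChain lt (M : Set H)) M :=
  (S.powerset.finite_toSet.subset fun _ hM => mem_powerset.2 hM.1).exists_le_maximal ⟨hCS, hC⟩

open scoped Classical in
theorem lt_of_lt_of_forall_covering [Preorder α] {M : Finset H} (hirr : ∀ h, ¬ lt h h)
    (htrans : ∀ {a b c}, lt a b → lt b c → lt a c) {r : H → α}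
    (hcov : ∀ h ∈ M, ∀ k ∈ M, lt k h → (¬ ∃ j ∈ M, lt k j ∧ lt j h) → r k < r h)
    {h k : H} (hh : h ∈ M) (hk : k ∈ M) (hkh : lt k h) : r k < r h := by
  by_cases hgap : ∃ j ∈ M, lt k j ∧ lt j h
  · obtain ⟨j, hj, hkj, hjh⟩ := hgap
    exact (lt_of_lt_of_forall_covering hirr htrans hcov hj hk hkj).trans
      (lt_of_lt_of_forall_covering hirr htrans hcov hh hj hjh)
  · exact hcov h hh k hk hkh hgap
-- `j` lies strictly between `k` and `h`, but neither between `k` and `j` nor between `j` and `h`.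
termination_by #{j ∈ M | lt k j ∧ lt j h}
decreasing_by
  all_goals
    refine card_lt_card ((ssubset_iff_of_subset ?_).2 ⟨j, ?_, ?_⟩)
    · intro i hi
      simp only [mem_filter] at hi ⊢
      first
      | exact ⟨hi.1, hi.2.1, htrans hi.2.2 hjh⟩
      | exact ⟨hi.1, htrans hkj hi.2.1, hi.2.2⟩
    · simp [hj, hkj, hjh]
    · simp [hirr]

theorem IsChain.injOn_of_lt [Preorder α] {C : Set H} (hC : IsChain lt C) {r : H → α}
    (hr : ∀ h ∈ C, ∀ k ∈ C, lt k h → r k < r h) : Set.InjOn r C := by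
  intro a ha b hb hab
  by_contra hne
  rcases hC ha hb hne with hlt | hlt
  · exact (hr b hb a ha hlt).ne hab
  · exact (hr a ha b hb hlt).ne' hab

end StrictRelation

/-- `S` is the set of hyperplanes crossed by the geodesic, `lt` the separation order, `r` the
rank-vector, and the partition into `D` chains is given by a colouring with chains as classes. -/
theorem stmt19 {H : Type*} (D f : ℕ) (lt : H → H → Prop)
    (hirr : ∀ h, ¬ lt h h) (htrans : ∀ {a b c}, lt a b → lt b c → lt a c)
    (r : H → Lex (Fin (D - 1) → ℕ))
    (S : Finset H)
    (hpartition : ∃ col : H → Fin D, ∀ h ∈ S, ∀ k ∈ S,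
      h ≠ k → col h = col k → (lt h k ∨ lt k h))
    (hvalues : ∀ C : Finset H, C ⊆ S → IsChain lt ↑C → (r '' ↑C).ncard ≤ 3 ^ (f - 1))
    (hdec : ∀ C : Finset H, C ⊆ S → IsChain lt ↑C →
      (∀ C' : Finset H, C' ⊆ S → IsChain lt ↑C' → C ⊆ C' → C = C') →
      ∀ h ∈ C, ∀ k ∈ C, lt k h → (¬ ∃ j ∈ C, lt k j ∧ lt j h) → r k < r h) :
    S.card ≤ 3 ^ (f - 1) * D := by
  classical
  have hchain_card : ∀ C ⊆ S, IsChain lt (C : Set H) → #C ≤ 3 ^ (f - 1) := by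
    intro C hCS hC
    obtain ⟨M, hCM, hM⟩ := exists_maximal_chain_superset hCS hC
    have hdecM := hdec M hM.1.1 hM.1.2 fun C' hC'S hC' => hM.eq_of_le ⟨hC'S, hC'⟩
    have hinj : Set.InjOn r M := hM.1.2.injOn_of_lt fun h hh k hk =>
      lt_of_lt_of_forall_covering hirr htrans hdecM hh hk
    calc #C ≤ #M := card_le_card hCM
      _ = (r '' M).ncard := by rw [hinj.ncard_image, Set.ncard_coe_finset]
      _ ≤ 3 ^ (f - 1) := hvalues M hM.1.1 hM.1.2
  obtain ⟨col, hcol⟩ := hpartition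
  have hcolour_chain (c : Fin D) : IsChain lt (↑{h ∈ S | col h = c} : Set H) := by
    intro a ha b hb hab
    simp only [coe_filter, Set.mem_ofPred_eq] at ha hb
    exact hcol a ha.1 b hb.1 hab (ha.2.trans hb.2.symm)
  calc #S ≤ 3 ^ (f - 1) * #(univ : Finset (Fin D)) :=
        card_le_mul_card_image_of_maps_to (f := col) (fun _ _ => mem_univ _) _ fun c _ =>
          hchain_card _ (filter_subset _ _) (hcolour_chain c)
    _ = 3 ^ (f - 1) * D := by rw [card_univ, Fintype.card_fin]
end
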